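/- arXiv:1904.00894 — 7 statements merged into one kernel-verified Lean document; each statement's English description precedes it below -/
import Mathlib

section
/- Fix n ∈ ℕ and integers λ_0, λ_1, …, λ_n with λ_0 = 0, λ_k ≥ 0 for all 0 ≤ k ≤ n, and |λ_{k+1} − λ_k| = 1 for all 0 ≤ k < n. Then the number of sign sequences ε ∈ {−1, 1}^n such that the associated walk X_k = Σ_{i ≤ k} ε_i (with X_0 = 0) satisfies X_k − 2·min_{0 ≤ j ≤ k} X_j = λ_k for every 0 ≤ k ≤ n is exactly λ_n + 1 (equivalently, under the uniform probability measure on {−1,1}^n the Pitman transform follows the path (λ_0,…,λ_n) with probability (λ_n + 1)/2^n). -/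
/-!
A ±1 walk `X` with running minimum `M` is recovered from its Pitman transform `Λ = X - 2M`
together with the single number `c = -M n`: the sequence `-M` satisfies the backward recursion
`-M k = min (Λ k) (-M (k + 1))`, because `M` can only drop at a step leaving the current minimum,
where `Λ k = -M k`. Conversely, for every `c ∈ [0, λ n]` the backward recursion started at `c`
produces a ±1 walk from `0` with transform `λ`. So the walks with transform `λ` correspond
bijectively to `[0, λ n]`.
-/

open Finset

namespace Pitman

def walk {n : ℕ} (ε : Fin n → ℤ) (k : ℕ) : ℤ :=
  ∑ i : Fin n, if (i : ℕ) < k then ε i else 0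

def runningMin (X : ℕ → ℤ) (k : ℕ) : ℤ :=
  (range (k + 1)).inf' (nonempty_range_iff.mpr (Nat.succ_ne_zero k)) X

def pitman (X : ℕ → ℤ) (k : ℕ) : ℤ :=
  X k - 2 * runningMin X k

def suffixMin (lam : ℕ → ℤ) (c : ℤ) (n k : ℕ) : ℤ :=
  (Ico k n).fold min c lam

def pitmanInv (lam : ℕ → ℤ) (c : ℤ) (n k : ℕ) : ℤ :=
  lam k - 2 * suffixMin lam c n k

section Walk

variable {n : ℕ}

@[simp]
lemma walk_zero (ε : Fin n → ℤ) : walk ε 0 = 0 := by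
  simp [walk]

lemma walk_succ_sub (ε : Fin n → ℤ) {k : ℕ} (hk : k < n) :
    walk ε (k + 1) - walk ε k = ε ⟨k, hk⟩ := by
  rw [walk, walk, ← sum_sub_distrib, ← Fintype.sum_ite_eq' ⟨k, hk⟩ ε]
  refine sum_congr rfl fun i _ => ?_
  have : i = ⟨k, hk⟩ ↔ (i : ℕ) = k := Fin.ext_iff
  split_ifs <;> omega

lemma walk_increments (X : ℕ → ℤ) {k : ℕ} (hk : k ≤ n) :
    walk (fun i : Fin n => X (i + 1) - X i) k = X k - X 0 := by
  induction k with
  | zero => simp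
  | succ k ih =>
    have := walk_succ_sub (fun i : Fin n => X (i + 1) - X i) hk
    linarith [ih (by omega)]

lemma eq_of_walk_eq {ε ε' : Fin n → ℤ} (h : ∀ k ≤ n, walk ε k = walk ε' k) :
    ε = ε' := by
  funext i
  have := walk_succ_sub ε i.isLt
  rw [h _ i.isLt, h _ i.isLt.le, walk_succ_sub ε' i.isLt] at this
  exact this.symm

lemma abs_walk_succ_sub_eq_one {ε : Fin n → ℤ} (hε : ∀ i, ε i = 1 ∨ ε i = -1) {k : ℕ}
    (hk : k < n) :
    |walk ε (k + 1) - walk ε k| = 1 := by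
  rw [walk_succ_sub ε hk]
  rcases hε ⟨k, hk⟩ with h | h <;> simp [h]

end Walk

section RunningMin

variable (X : ℕ → ℤ)

@[simp]
lemma runningMin_zero : runningMin X 0 = X 0 := by
  simp [runningMin]

lemma runningMin_succ (k : ℕ) :
    runningMin X (k + 1) = min (runningMin X k) (X (k + 1)) := by
  simp only [runningMin, range_add_one (n := k + 1)]
  rw [inf'_insert _ _, min_comm]

lemma runningMin_le {j k : ℕ} (h : j ≤ k) : runningMin X k ≤ X j :=
  inf'_le _ (mem_range.2 (Nat.lt_succ_of_le h))

lemma runningMin_congr {Y : ℕ → ℤ} {k : ℕ} (h : ∀ j ≤ k, X j = Y j) :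
    runningMin X k = runningMin Y k :=
  inf'_congr _ rfl fun j hj => h j (Nat.le_of_lt_succ (mem_range.1 hj))

lemma neg_runningMin_le_pitman (k : ℕ) : -runningMin X k ≤ pitman X k := by
  have := runningMin_le X (le_refl k)
  rw [pitman]
  omega

lemma neg_runningMin_eq_min {k : ℕ} (hk : |X (k + 1) - X k| = 1) :
    -runningMin X k = min (pitman X k) (-runningMin X (k + 1)) := by
  have := runningMin_le X (le_refl k)
  rw [runningMin_succ, pitman]
  rcases (abs_eq zero_le_one).1 hk with h | h <;> omega

end RunningMin

section BackMin

variable (lam : ℕ → ℤ) (c : ℤ) (n : ℕ)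

@[simp]
lemma suffixMin_self : suffixMin lam c n n = c := by
  simp [suffixMin]

lemma suffixMin_of_lt {k : ℕ} (hk : k < n) :
    suffixMin lam c n k = min (lam k) (suffixMin lam c n (k + 1)) := by
  rw [suffixMin, ← insert_Ico_add_one_left_eq_Ico hk, fold_insert (by simp)]
  rfl

lemma eq_suffixMin_of_rec {m : ℕ → ℤ} (hn : m n = c)
    (hm : ∀ k < n, m k = min (lam k) (m (k + 1))) {k : ℕ} (hk : k ≤ n) :
    m k = suffixMin lam c n k := by
  induction hk using Nat.decreasingInduction with
  | self => simp [hn]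
  | of_succ k hk ih => rw [hm k hk, suffixMin_of_lt lam c n hk, ih]

lemma suffixMin_le {k : ℕ} (hk : k ≤ n) (hc : c ≤ lam n) : suffixMin lam c n k ≤ lam k := by
  rcases hk.lt_or_eq with hk | rfl
  · exact (suffixMin_of_lt lam c n hk).trans_le (min_le_left _ _)
  · simpa using hc

lemma suffixMin_nonneg (hc : 0 ≤ c) (hlam : ∀ k ≤ n, 0 ≤ lam k) (k : ℕ) :
    0 ≤ suffixMin lam c n k :=
  (le_fold_min 0).2 ⟨hc, fun j hj => hlam j (mem_Ico.1 hj).2.le⟩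

variable {lam c n}

lemma suffixMin_step (hstep : ∀ k < n, |lam (k + 1) - lam k| = 1) (hc : c ≤ lam n)
    {k : ℕ} (hk : k < n) :
    suffixMin lam c n (k + 1) = suffixMin lam c n k ∨
      suffixMin lam c n k = lam k ∧ suffixMin lam c n (k + 1) = lam (k + 1) ∧
        lam (k + 1) = lam k + 1 := by
  have h1 := suffixMin_of_lt lam c n hk
  have h2 := suffixMin_le lam c n (k := k + 1) (by omega) hc
  rcases (abs_eq zero_le_one).1 (hstep k hk) with h | h <;> omega

end BackMin

section PitmanInv

variable {lam : ℕ → ℤ} {n : ℕ} {c : ℤ}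

lemma suffixMin_zero (h0 : lam 0 = 0) (hnonneg : ∀ k ≤ n, 0 ≤ lam k)
    (hc : c ∈ Set.Icc 0 (lam n)) :
    suffixMin lam c n 0 = 0 :=
  le_antisymm (h0 ▸ suffixMin_le lam c n (Nat.zero_le n) hc.2)
    (suffixMin_nonneg lam c n hc.1 hnonneg 0)

lemma pitmanInv_zero (h0 : lam 0 = 0) (hnonneg : ∀ k ≤ n, 0 ≤ lam k)
    (hc : c ∈ Set.Icc 0 (lam n)) :
    pitmanInv lam c n 0 = 0 := by
  rw [pitmanInv, h0, suffixMin_zero h0 hnonneg hc, mul_zero, sub_zero]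

lemma abs_pitmanInv_succ_sub_eq_one (hstep : ∀ k < n, |lam (k + 1) - lam k| = 1)
    (hc : c ≤ lam n) {k : ℕ} (hk : k < n) :
    |pitmanInv lam c n (k + 1) - pitmanInv lam c n k| = 1 := by
  have := (abs_eq zero_le_one).1 (hstep k hk)
  simp only [pitmanInv]
  rw [abs_eq zero_le_one]
  rcases suffixMin_step hstep hc hk with h | h <;> omega

lemma runningMin_pitmanInv (h0 : lam 0 = 0) (hnonneg : ∀ k ≤ n, 0 ≤ lam k)
    (hstep : ∀ k < n, |lam (k + 1) - lam k| = 1) (hc : c ∈ Set.Icc 0 (lam n)) {k : ℕ}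
    (hk : k ≤ n) :
    runningMin (pitmanInv lam c n) k = -suffixMin lam c n k := by
  induction k with
  | zero =>
    rw [runningMin_zero, pitmanInv_zero h0 hnonneg hc, suffixMin_zero h0 hnonneg hc, neg_zero]
  | succ k ih =>
    rw [runningMin_succ, ih (by omega)]
    have := suffixMin_le lam c n hk hc.2
    simp only [pitmanInv]
    rcases suffixMin_step hstep hc.2 hk with h | h <;> omega

lemma pitman_pitmanInv (h0 : lam 0 = 0) (hnonneg : ∀ k ≤ n, 0 ≤ lam k)
    (hstep : ∀ k < n, |lam (k + 1) - lam k| = 1) (hc : c ∈ Set.Icc 0 (lam n)) {k : ℕ}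
    (hk : k ≤ n) :
    pitman (pitmanInv lam c n) k = lam k := by
  rw [pitman, runningMin_pitmanInv h0 hnonneg hstep hc hk, pitmanInv]
  ring

end PitmanInv

lemma eq_pitmanInv {n : ℕ} {lam X : ℕ → ℤ} (hX : ∀ k < n, |X (k + 1) - X k| = 1)
    (hpit : ∀ k ≤ n, pitman X k = lam k) {k : ℕ} (hk : k ≤ n) :
    X k = pitmanInv lam (-runningMin X n) n k := by
  have hrec : ∀ j < n, -runningMin X j = min (lam j) (-runningMin X (j + 1)) := fun j hj => by
    rw [← hpit j hj.le]
    exact neg_runningMin_eq_min X (hX j hj)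
  rw [pitmanInv, ← eq_suffixMin_of_rec lam _ n rfl hrec hk, ← hpit k hk, pitman]
  ring

def pitmanFiber (n : ℕ) (lam : ℕ → ℤ) : Set (Fin n → ℤ) :=
  {ε | (∀ i, ε i = 1 ∨ ε i = -1) ∧ ∀ k ≤ n, pitman (walk ε) k = lam k}

section Fiber

variable {n : ℕ} {lam : ℕ → ℤ}

lemma injOn_neg_runningMin_walk :
    Set.InjOn (fun ε : Fin n → ℤ => -runningMin (walk ε) n) (pitmanFiber n lam) := by
  intro ε hε ε' hε' h
  refine eq_of_walk_eq fun k hk => ?_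
  rw [eq_pitmanInv (fun k hk => abs_walk_succ_sub_eq_one hε.1 hk) hε.2 hk,
    eq_pitmanInv (fun k hk => abs_walk_succ_sub_eq_one hε'.1 hk) hε'.2 hk]
  exact congrArg (pitmanInv lam · n k) h

lemma image_neg_runningMin_walk (h0 : lam 0 = 0) (hnonneg : ∀ k ≤ n, 0 ≤ lam k)
    (hstep : ∀ k < n, |lam (k + 1) - lam k| = 1) :
    (fun ε : Fin n → ℤ => -runningMin (walk ε) n) '' pitmanFiber n lam =
      Set.Icc 0 (lam n) := by
  ext c
  constructor
  · rintro ⟨ε, ⟨-, hpit⟩, rfl⟩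
    have hmin : runningMin (walk ε) n ≤ 0 :=
      walk_zero ε ▸ runningMin_le (walk ε) (Nat.zero_le n)
    exact ⟨neg_nonneg.2 hmin, hpit n le_rfl ▸ neg_runningMin_le_pitman (walk ε) n⟩
  · intro hc
    set X := pitmanInv lam c n
    have hX0 : X 0 = 0 := pitmanInv_zero h0 hnonneg hc
    have hwalk : ∀ k ≤ n, walk (fun i : Fin n => X (i + 1) - X i) k = X k := fun k hk => by
      rw [walk_increments X hk, hX0, sub_zero]
    refine ⟨fun i => X (i + 1) - X i, ⟨fun i => ?_, fun k hk => ?_⟩, ?_⟩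
    · exact (abs_eq zero_le_one).1 (abs_pitmanInv_succ_sub_eq_one hstep hc.2 i.isLt)
    · rw [pitman, hwalk k hk, runningMin_congr _ fun j hj => hwalk j (hj.trans hk)]
      exact pitman_pitmanInv h0 hnonneg hstep hc hk
    · simp only
      rw [runningMin_congr _ hwalk, runningMin_pitmanInv h0 hnonneg hstep hc le_rfl,
        suffixMin_self, neg_neg]

end Fiber

end Pitman

/-- Discrete Pitman counting: the number of ±1 sign sequences of length `n`
whose walk `X_k = ∑_{i<k} ε_i` satisfies `X_k - 2 min_{j ≤ k} X_j = λ_k` for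
all `0 ≤ k ≤ n` equals `λ_n + 1`. -/
theorem pitman_discrete_count (n : ℕ) (lam : ℕ → ℤ)
    (h0 : lam 0 = 0) (hnonneg : ∀ k ≤ n, 0 ≤ lam k)
    (hstep : ∀ k < n, |lam (k + 1) - lam k| = 1) :
    ({ε : Fin n → ℤ | (∀ i, ε i = 1 ∨ ε i = -1) ∧
        ∀ k ≤ n,
          (∑ i : Fin n, if (i : ℕ) < k then ε i else 0) -
              2 * (Finset.range (k + 1)).inf'
                (Finset.nonempty_range_iff.mpr (Nat.succ_ne_zero k))
                (fun j => ∑ i : Fin n, if (i : ℕ) < j then ε i else 0)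
            = lam k}.ncard : ℤ) = lam n + 1 := by
  change ((Pitman.pitmanFiber n lam).ncard : ℤ) = lam n + 1
  rw [← Pitman.injOn_neg_runningMin_walk.ncard_image,
    Pitman.image_neg_runningMin_walk h0 hnonneg hstep,
    ← coe_Icc, Set.ncard_coe_finset, Int.card_Icc]
  have := hnonneg n le_rfl
  omega
end

section
/- Fix n ∈ ℕ and integers λ_0, λ_1, …, λ_n with λ_0 = 0, λ_k ≥ 0 for all 0 ≤ k ≤ n, and |λ_{k+1} − λ_k| = 1 for all 0 ≤ k < n. Then for every integer m with |m| ≤ λ_n and λ_n − m even, there is exactly one sign sequence ε ∈ {−1, 1}^n whose walk X_k = Σ_{i ≤ k} ε_i satisfies both X_k − 2·min_{0 ≤ j ≤ k} X_j = λ_k for every 0 ≤ k ≤ n and X_n = m. -/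
open Finset

/-- future minimum functional -/
def pitJ (lam : ℕ → ℤ) (n : ℕ) (c : ℤ) (k : ℕ) : ℤ :=
  min c ((insert n (Finset.Icc k n)).inf' (insert_nonempty _ _) lam)

lemma pitJ_le {lam : ℕ → ℤ} {n : ℕ} {c : ℤ} {k : ℕ} (hk : k ≤ n) :
    pitJ lam n c k ≤ lam k :=
  le_trans (min_le_right _ _)
    (Finset.inf'_le _ (by simp [Finset.mem_insert, Finset.mem_Icc, hk]))

lemma pitJ_rec {lam : ℕ → ℤ} {n : ℕ} {c : ℤ} {k : ℕ} (hk : k < n) :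
    pitJ lam n c k = min (lam k) (pitJ lam n c (k + 1)) := by
  have hmem : ∀ j ∈ insert n (Finset.Icc (k+1) n), j ∈ insert n (Finset.Icc k n) := by
    intro j hj
    rcases Finset.mem_insert.mp hj with h | h
    · simp [h]
    · exact Finset.mem_insert_of_mem (Finset.mem_Icc.mpr
        ⟨le_trans (Nat.le_succ k) (Finset.mem_Icc.mp h).1, (Finset.mem_Icc.mp h).2⟩)
  apply le_antisymm
  · refine le_min (pitJ_le hk.le) (le_min (min_le_left _ _) ?_)
    exact le_trans (min_le_right _ _)
      (Finset.le_inf' _ _ (fun j hj => Finset.inf'_le _ (hmem j hj)))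
  · refine le_min (le_trans (min_le_right _ _) (min_le_left _ _)) ?_
    refine Finset.le_inf' _ _ (fun j hj => ?_)
    rcases Finset.mem_insert.mp hj with h | h
    · subst h
      exact le_trans (min_le_right _ _) (le_trans (min_le_right _ _)
        (Finset.inf'_le _ (Finset.mem_insert_self _ _)))
    · rcases Finset.mem_Icc.mp h with ⟨h1, h2⟩
      rcases Nat.eq_or_lt_of_le h1 with h1 | h1
      · subst h1; exact min_le_left _ _
      · exact le_trans (min_le_right _ _) (le_trans (min_le_right _ _)
          (Finset.inf'_le _ (Finset.mem_insert_of_mem (Finset.mem_Icc.mpr ⟨h1, h2⟩))))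

lemma pitJ_zero {lam : ℕ → ℤ} {n : ℕ} {c : ℤ} (h0 : lam 0 = 0)
    (hnonneg : ∀ k ≤ n, 0 ≤ lam k) (hc0 : 0 ≤ c) : pitJ lam n c 0 = 0 := by
  apply le_antisymm
  · exact le_of_le_of_eq (pitJ_le (Nat.zero_le n)) h0
  · refine le_min hc0 (Finset.le_inf' _ _ (fun j hj => ?_))
    rcases Finset.mem_insert.mp hj with h | h
    · exact h ▸ hnonneg n le_rfl
    · exact hnonneg j (Finset.mem_Icc.mp h).2

lemma pitJ_n {lam : ℕ → ℤ} {n : ℕ} {c : ℤ} (hcle : c ≤ lam n) : pitJ lam n c n = c := by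
  apply le_antisymm (min_le_left _ _)
  refine le_min le_rfl (Finset.le_inf' _ _ (fun j hj => ?_))
  have : j = n := by
    rcases Finset.mem_insert.mp hj with h | h
    · exact h
    · have := Finset.mem_Icc.mp h; omega
  exact this ▸ hcle

lemma pitJ_cases {lam : ℕ → ℤ} {n : ℕ} {c : ℤ} {k : ℕ} (hk : k < n)
    (hstep : |lam (k + 1) - lam k| = 1) :
    (pitJ lam n c (k+1) ≤ lam k ∧ pitJ lam n c k = pitJ lam n c (k+1)) ∨
    (pitJ lam n c k = lam k ∧ pitJ lam n c (k+1) = lam k + 1 ∧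
      lam (k+1) = lam k + 1) := by
  have hle : pitJ lam n c (k+1) ≤ lam (k+1) := pitJ_le hk
  have hrec := pitJ_rec (lam := lam) (c := c) hk
  have hs : lam (k+1) - lam k = 1 ∨ lam (k+1) - lam k = -1 :=
    (abs_eq (by norm_num)).mp hstep
  rcases le_or_gt (pitJ lam n c (k+1)) (lam k) with h | h
  · exact Or.inl ⟨h, by rw [hrec, min_eq_right h]⟩
  · right
    have h1 : pitJ lam n c (k+1) = lam k + 1 := by omega
    refine ⟨?_, h1, by omega⟩
    rw [hrec, min_eq_left (by omega)]

lemma range_inf'_one (f : ℕ → ℤ) (H : (Finset.range 1).Nonempty) :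
    (Finset.range 1).inf' H f = f 0 := by
  have h1 : (Finset.range 1) = {0} := rfl
  exact le_antisymm (Finset.inf'_le _ (by simp)) (Finset.le_inf' _ _ (by simp))

lemma range_inf'_succ (f : ℕ → ℤ) (k : ℕ) (H : (Finset.range (k+2)).Nonempty)
    (H' : (Finset.range (k+1)).Nonempty) :
    (Finset.range (k+2)).inf' H f
      = min (f (k+1)) ((Finset.range (k+1)).inf' H' f) := by
  apply le_antisymm
  · rw [le_min_iff]
    constructor
    · exact Finset.inf'_le _ (Finset.mem_range.mpr (Nat.lt_succ_self _))
    · exact Finset.inf'_mono _ (Finset.range_subset_range.mpr (Nat.le_succ _)) H'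
  · rw [Finset.le_inf'_iff]
    intro j hj
    rcases Nat.lt_succ_iff_lt_or_eq.mp (Finset.mem_range.mp hj) with h | h
    · refine le_trans (min_le_right _ _) ?_
      exact Finset.inf'_le _ (Finset.mem_range.mpr h)
    · subst h; exact min_le_left _ _

lemma sum_ite_lt_eq {n k : ℕ} (hk : k ≤ n) (ε : Fin n → ℤ) (f : ℕ → ℤ)
    (hf : ∀ i : Fin n, f i = ε i) :
    (∑ i : Fin n, if (i : ℕ) < k then ε i else 0) = ∑ i ∈ Finset.range k, f i :=
  calc (∑ i : Fin n, if (i : ℕ) < k then ε i else 0)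
      = ∑ i : Fin n, (fun j => if j < k then f j else 0) (i : ℕ) := by
        refine Finset.sum_congr rfl fun i _ => ?_
        simp only [hf i]
    _ = ∑ i ∈ Finset.range n, (if i < k then f i else 0) :=
        Fin.sum_univ_eq_sum_range (fun j => if j < k then f j else 0) n
    _ = ∑ i ∈ Finset.range k, (if i < k then f i else 0) :=
        (Finset.sum_subset (Finset.range_subset_range.mpr hk)
          (fun x _ hx => if_neg (by simpa using hx))).symm
    _ = ∑ i ∈ Finset.range k, f i :=
        Finset.sum_congr rfl (fun i hi => if_pos (Finset.mem_range.mp hi))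

lemma sum_fin_eq {n : ℕ} (ε : Fin n → ℤ) (f : ℕ → ℤ)
    (hf : ∀ i : Fin n, f i = ε i) :
    (∑ i : Fin n, ε i) = ∑ i ∈ Finset.range n, f i := by
  rw [← Fin.sum_univ_eq_sum_range f n]
  exact Finset.sum_congr rfl fun i _ => (hf i).symm

/-- Refined discrete Pitman counting: given an admissible Pitman path
`λ_0 = 0, …, λ_n` and an endpoint `m` with `|m| ≤ λ_n` and `λ_n - m` even,
there is exactly one ±1 sign sequence whose walk follows the Pitman path
`λ` and ends at `X_n = m`. -/
theorem pitman_discrete_conditional_unique (n : ℕ) (lam : ℕ → ℤ) (m : ℤ)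
    (h0 : lam 0 = 0) (hnonneg : ∀ k ≤ n, 0 ≤ lam k)
    (hstep : ∀ k < n, |lam (k + 1) - lam k| = 1)
    (hm : |m| ≤ lam n) (hpar : Even (lam n - m)) :
    ∃! ε : Fin n → ℤ,
      (∀ i, ε i = 1 ∨ ε i = -1) ∧
      (∀ k ≤ n,
        (∑ i : Fin n, if (i : ℕ) < k then ε i else 0) -
            2 * (Finset.range (k + 1)).inf'
              (Finset.nonempty_range_iff.mpr (Nat.succ_ne_zero k))
              (fun j => ∑ i : Fin n, if (i : ℕ) < j then ε i else 0)
          = lam k) ∧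
      (∑ i : Fin n, ε i) = m := by
  obtain ⟨c, hc⟩ := hpar
  obtain ⟨hm1, hm2⟩ := abs_le.mp hm
  have hc0 : 0 ≤ c := by omega
  have hcle : c ≤ lam n := by omega
  set J : ℕ → ℤ := pitJ lam n c with hJ
  set X : ℕ → ℤ := fun k => lam k - 2 * J k with hXdef
  have hXeq : ∀ k, X k = lam k - 2 * J k := fun k => rfl
  have hJ0 : J 0 = 0 := pitJ_zero h0 hnonneg hc0
  have hJn : J n = c := pitJ_n hcle
  have hX0 : X 0 = 0 := by rw [hXeq 0, hJ0, h0]; ring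
  have hXn : X n = m := by rw [hXeq n, hJn]; omega
  have hJle : ∀ k ≤ n, J k ≤ lam k := fun k hk => pitJ_le hk
  have hcase : ∀ k < n,
      (J (k+1) ≤ lam k ∧ J k = J (k+1)) ∨
      (J k = lam k ∧ J (k+1) = lam k + 1 ∧ lam (k+1) = lam k + 1) :=
    fun k hk => pitJ_cases hk (hstep k hk)
  have hXstep : ∀ k < n, X (k+1) - X k = 1 ∨ X (k+1) - X k = -1 := by
    intro k hk
    have hs : lam (k+1) - lam k = 1 ∨ lam (k+1) - lam k = -1 :=
      (abs_eq (by norm_num)).mp (hstep k hk)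
    have e1 := hXeq (k+1); have e0 := hXeq k
    rcases hcase k hk with ⟨h1, h2⟩ | ⟨h1, h2, h3⟩ <;> omega
  -- the running minimum of X equals -J
  have hXmin : ∀ k ≤ n, ∀ H : (Finset.range (k+1)).Nonempty,
      (Finset.range (k+1)).inf' H X = -(J k) := by
    intro k hk
    induction k with
    | zero => intro H; rw [range_inf'_one]; omega
    | succ k ih =>
      intro H
      have hk' : k < n := hk
      rw [range_inf'_succ X k H (Finset.nonempty_range_iff.mpr (Nat.succ_ne_zero k)),
        ih hk'.le (Finset.nonempty_range_iff.mpr (Nat.succ_ne_zero k))]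
      have e1 := hXeq (k+1)
      have hle1 : J (k+1) ≤ lam (k+1) := hJle (k+1) hk
      rcases hcase k hk' with ⟨h1, h2⟩ | ⟨h1, h2, h3⟩ <;> omega
  classical
  refine ⟨fun i => X ((i : ℕ) + 1) - X (i : ℕ), ⟨?_, ?_, ?_⟩, ?_⟩
  · intro i; exact hXstep i i.isLt
  · intro k hk
    have hsum : ∀ j ≤ n,
        (∑ i : Fin n, if (i : ℕ) < j then (X ((i : ℕ)+1) - X (i : ℕ)) else 0) = X j := by
      intro j hj
      rw [sum_ite_lt_eq hj _ (fun i => X (i+1) - X i) (fun i => rfl),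
        Finset.sum_range_sub X j, hX0, sub_zero]
    rw [hsum k hk, Finset.inf'_congr _ rfl
      (fun j hj => hsum j (le_trans (Nat.lt_succ_iff.mp (Finset.mem_range.mp hj)) hk)),
      hXmin k hk]
    rw [hXeq k]; ring
  · rw [sum_fin_eq _ (fun i => X (i+1) - X i) (fun i => rfl),
      Finset.sum_range_sub X n, hX0, sub_zero, hXn]
  -- uniqueness
  · intro ε hP
    obtain ⟨hsgn, hpath, hend⟩ := hP
    set f : ℕ → ℤ := fun i => if h : i < n then ε ⟨i, h⟩ else 0 with hf
    have hfε : ∀ i : Fin n, f i = ε i := by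
      intro i; simp [hf, i.isLt]
    set Y : ℕ → ℤ := fun k => ∑ i ∈ Finset.range k, f i with hY
    have hYs : ∀ k, Y (k+1) = Y k + f k := fun k => Finset.sum_range_succ f k
    have hYstep : ∀ k < n, Y (k+1) - Y k = 1 ∨ Y (k+1) - Y k = -1 := by
      intro k hk
      have h1 := hsgn ⟨k, hk⟩
      have hfk : f k = ε ⟨k, hk⟩ := by simp [hf, hk]
      have h2 := hYs k
      omega
    have hpath' : ∀ k ≤ n, ∀ H : (Finset.range (k+1)).Nonempty,
        Y k - 2 * (Finset.range (k+1)).inf' H Y = lam k := by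
      intro k hk H
      have h1 := hpath k hk
      rw [sum_ite_lt_eq hk ε f hfε] at h1
      rw [Finset.inf'_congr _ rfl
        (fun j hj => sum_ite_lt_eq
          (le_trans (Nat.lt_succ_iff.mp (Finset.mem_range.mp hj)) hk) ε f hfε)] at h1
      exact h1
    have hYn : Y n = m := by
      calc Y n = ∑ i : Fin n, ε i := (sum_fin_eq ε f hfε).symm
        _ = m := hend
    -- downward induction: running minimum of Y equals -J
    have key : ∀ j : ℕ, ∀ k, k + j = n → ∀ H : (Finset.range (k+1)).Nonempty,
        (Finset.range (k+1)).inf' H Y = -(J k) := by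
      intro j
      induction j with
      | zero =>
        intro k hkn H
        have hk : k = n := by omega
        subst hk
        have h1 := hpath' k le_rfl H
        omega
      | succ j ih =>
        intro k hkn H
        have hkn' : k < n := by omega
        have ihk := ih (k+1) (by omega) (Finset.nonempty_range_iff.mpr (Nat.succ_ne_zero _))
        rw [range_inf'_succ Y k (Finset.nonempty_range_iff.mpr (Nat.succ_ne_zero _)) H] at ihk
        have hIle : (Finset.range (k+1)).inf' H Y ≤ Y k :=
          Finset.inf'_le Y (Finset.mem_range.mpr (Nat.lt_succ_self k))
        have h1 := hpath' k hkn'.le H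
        have h2 := hYstep k hkn'
        rcases hcase k hkn' with ⟨hA1, hA2⟩ | ⟨hB1, hB2, hB3⟩ <;> omega
    have hYX : ∀ k ≤ n, Y k = X k := by
      intro k hk
      have H : (Finset.range (k+1)).Nonempty :=
        Finset.nonempty_range_iff.mpr (Nat.succ_ne_zero k)
      have h1 := hpath' k hk H
      have h2 := key (n - k) k (by omega) H
      have h3 := hXeq k
      omega
    funext i
    show ε i = X ((i : ℕ) + 1) - X (i : ℕ)
    have h1 : Y ((i : ℕ)+1) = X ((i : ℕ)+1) := hYX _ i.isLt
    have h2 : Y (i : ℕ) = X (i : ℕ) := hYX _ (le_of_lt i.isLt)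
    have h3 := hYs (i : ℕ)
    have h4 : f (i : ℕ) = ε i := hfε i
    omega
end

section
/- Let t > 0 and let f : ℝ → ℝ be continuous on the interval [0, t]. Then (1/r)·log(∫₀ᵗ exp(−r·f(s)) ds) tends to −inf_{s ∈ [0,t]} f(s) as r → +∞. -/
open Filter Real MeasureTheory

/-- Laplace method: for `f` continuous on `[0, t]`,
`(1/r) log ∫₀ᵗ e^{-r f(s)} ds → - inf_{s ∈ [0,t]} f(s)` as `r → ∞`. -/
theorem laplace_method (t : ℝ) (ht : 0 < t) (f : ℝ → ℝ)
    (hf : ContinuousOn f (Set.Icc 0 t)) :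
    Tendsto
      (fun r : ℝ => (1 / r) * Real.log (∫ s in (0:ℝ)..t, Real.exp (-r * f s)))
      atTop (nhds (-sInf (f '' Set.Icc 0 t))) := by
  obtain ⟨x₀, hx₀, hmin⟩ := isCompact_Icc.exists_isMinOn ⟨0, Set.left_mem_Icc.2 ht.le⟩ hf
  set m := sInf (f '' Set.Icc 0 t) with hm
  have hmx : m = f x₀ := by
    apply le_antisymm
    · exact csInf_le (isCompact_Icc.bddBelow_image hf) ⟨x₀, hx₀, rfl⟩
    · refine le_csInf ((Set.nonempty_Icc.2 ht.le).image f) ?_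
      rintro y ⟨s, hs, rfl⟩
      exact hmin hs
  have hmle : ∀ s ∈ Set.Icc (0:ℝ) t, m ≤ f s := fun s hs => hmx ▸ hmin hs
  -- integrability of the integrand
  have hint : ∀ r : ℝ, IntervalIntegrable (fun s => Real.exp (-r * f s)) volume 0 t := by
    intro r
    apply ContinuousOn.intervalIntegrable
    rw [Set.uIcc_of_le ht.le]
    exact Real.continuous_exp.comp_continuousOn (continuousOn_const.mul hf)
  rw [Metric.tendsto_atTop]
  intro ε hε
  -- find a subinterval where f ≤ m + ε/3
  obtain ⟨δ, hδ, hδ'⟩ := Metric.continuousOn_iff.mp hf x₀ hx₀ (ε / 3) (by positivity)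
  set a := max 0 (x₀ - δ / 2) with ha
  set b := min t (x₀ + δ / 2) with hb
  have ha0 : 0 ≤ a := le_max_left _ _
  have hbt : b ≤ t := min_le_left _ _
  have hab : a < b := by
    rcases lt_or_eq_of_le hx₀.2 with h | h
    · have h1 : a ≤ x₀ := max_le hx₀.1 (by linarith)
      have h2 : x₀ < b := lt_min h (by linarith)
      linarith
    · have h1 : a < t := max_lt ht (by rw [h]; linarith)
      have h2 : b = t := min_eq_left (by rw [h]; linarith)
      linarith
  have hfab : ∀ s ∈ Set.Icc a b, f s ≤ m + ε / 3 := by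
    intro s hs
    have hs1 : s ∈ Set.Icc (0:ℝ) t := ⟨le_trans ha0 hs.1, le_trans hs.2 hbt⟩
    have hd : dist s x₀ < δ := by
      rw [Real.dist_eq, abs_lt]
      constructor
      · have := hs.1; have := le_max_right 0 (x₀ - δ / 2)
        nlinarith [le_max_right 0 (x₀ - δ / 2)]
      · have := hs.2; have := min_le_right t (x₀ + δ / 2)
        nlinarith
    have := hδ' s hs1 hd
    rw [Real.dist_eq, abs_lt] at this
    rw [hmx]; linarith [this.2]
  -- eventual bounds
  have h1 : Tendsto (fun r : ℝ => Real.log (b - a) / r) atTop (nhds 0) := by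
    simp only [div_eq_mul_inv]
    simpa using tendsto_inv_atTop_zero.const_mul (Real.log (b - a))
  have h2 : Tendsto (fun r : ℝ => Real.log t / r) atTop (nhds 0) := by
    simp only [div_eq_mul_inv]
    simpa using tendsto_inv_atTop_zero.const_mul (Real.log t)
  have hev1 : ∀ᶠ r : ℝ in atTop, -(ε / 3) < Real.log (b - a) / r :=
    h1.eventually_const_lt (by linarith)
  have hev2 : ∀ᶠ r : ℝ in atTop, Real.log t / r < ε :=
    h2.eventually_lt_const hε
  obtain ⟨R, hR⟩ := ((hev1.and hev2).and (eventually_gt_atTop 0)).exists_forall_of_atTop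
  refine ⟨R, fun r hr => ?_⟩
  obtain ⟨⟨hr1, hr2⟩, hrpos⟩ := hR r hr
  set I := ∫ s in (0:ℝ)..t, Real.exp (-r * f s) with hI
  -- lower bound on I
  have hlow : (b - a) * Real.exp (-r * (m + ε / 3)) ≤ I := by
    have step1 : (b - a) * Real.exp (-r * (m + ε / 3))
        ≤ ∫ s in a..b, Real.exp (-r * f s) := by
      have := intervalIntegral.integral_mono_on (μ := volume) hab.le
        (intervalIntegrable_const (c := Real.exp (-r * (m + ε / 3))))
        ((hint r).mono_set (Set.uIcc_subset_uIcc
          (by rw [Set.uIcc_of_le ht.le]; exact ⟨ha0, hab.le.trans hbt⟩)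
          (by rw [Set.uIcc_of_le ht.le]; exact ⟨ha0.trans hab.le, hbt⟩)))
        (fun s hs => Real.exp_le_exp.2 (by nlinarith [hfab s hs]))
      simpa [intervalIntegral.integral_const, smul_eq_mul] using this
    have step2 : (∫ s in a..b, Real.exp (-r * f s)) ≤ I := by
      apply intervalIntegral.integral_mono_interval ha0 hab.le hbt
      · filter_upwards with s
        exact (Real.exp_pos _).le
      · exact hint r
    linarith
  have hIpos : 0 < I :=
    lt_of_lt_of_le (mul_pos (by linarith) (Real.exp_pos _)) hlow
  -- upper bound on I
  have hup : I ≤ t * Real.exp (-r * m) := by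
    have := intervalIntegral.integral_mono_on (μ := volume) ht.le (hint r)
      (intervalIntegrable_const (c := Real.exp (-r * m)))
      (fun s hs => Real.exp_le_exp.2 (by nlinarith [hmle s hs]))
    rw [intervalIntegral.integral_const, smul_eq_mul, sub_zero] at this
    exact this
  -- conclude
  have hlogup : Real.log I ≤ Real.log t + (-r * m) := by
    calc Real.log I ≤ Real.log (t * Real.exp (-r * m)) :=
          Real.log_le_log hIpos hup
      _ = Real.log t + (-r * m) := by rw [Real.log_mul ht.ne' (Real.exp_ne_zero _), Real.log_exp]
  have hloglow : Real.log (b - a) + (-r * (m + ε / 3)) ≤ Real.log I := by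
    calc Real.log (b - a) + (-r * (m + ε / 3))
        = Real.log ((b - a) * Real.exp (-r * (m + ε / 3))) := by
          rw [Real.log_mul (by linarith) (Real.exp_ne_zero _), Real.log_exp]
      _ ≤ Real.log I := Real.log_le_log (mul_pos (by linarith) (Real.exp_pos _)) hlow
  rw [Real.dist_eq]
  have hrne : r ≠ 0 := hrpos.ne'
  have e1 : 1 / r * (Real.log (b - a) + -r * (m + ε / 3)) ≤ 1 / r * Real.log I :=
    mul_le_mul_of_nonneg_left hloglow (by positivity)
  have e2 : 1 / r * (Real.log (b - a) + -r * (m + ε / 3))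
      = Real.log (b - a) / r - (m + ε / 3) := by field_simp; ring
  have e3 : 1 / r * Real.log I ≤ 1 / r * (Real.log t + -r * m) :=
    mul_le_mul_of_nonneg_left hlogup (by positivity)
  have e4 : 1 / r * (Real.log t + -r * m) = Real.log t / r - m := by field_simp; ring
  rw [abs_lt]
  constructor <;> [nlinarith; nlinarith]
end

section
/- Let P be the law of three independent standard Gaussian random variables (N_1, N_2, N_3), i.e., the threefold product of the standard Gaussian measure N(0,1) on ℝ. Then the pushforward of P under the map x ↦ x₁/√(x₁² + x₂² + x₃²) (defined arbitrarily on the null set {x = 0}) is the uniform probability measure on [−1, 1], with density 1/2 with respect to Lebesgue measure restricted to [−1, 1]. -/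
open MeasureTheory ProbabilityTheory

/-!
Polar coordinates in the last two variables, followed by polar coordinates in the pair
`(x₁, r)`, are spherical coordinates around the `x₁`-axis: the volume element becomes
`ρ² sin θ dρ dθ` and `x₁ / |x| = cos θ`, and the substitution `t = cos θ` turns `sin θ dθ` into
`dt` (Archimedes). So under any radial density on `ℝ³` the law of `x₁ / |x|` is a constant
multiple of Lebesgue measure on `[-1, 1]`; for a probability density the constant must be `1/2`.
-/

open Real Set
open scoped ENNReal

theorem sq_add_sq_polarCoord_symm (p : ℝ × ℝ) :
    (polarCoord.symm p).1 ^ 2 + (polarCoord.symm p).2 ^ 2 = p.1 ^ 2 := by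
  simp only [polarCoord_symm_apply]
  linear_combination p.1 ^ 2 * cos_sq_add_sin_sq p.2

theorem setLIntegral_polarCoord_target_mul {F Φ : ℝ → ℝ≥0∞} (hF : Measurable F)
    (hΦ : Measurable Φ) :
    ∫⁻ q in polarCoord.target, F q.1 * Φ q.2 =
      (∫⁻ ρ in Ioi 0, F ρ) * ∫⁻ θ in Ioo (-π) π, Φ θ := by
  rw [polarCoord_target, Measure.volume_eq_prod, ← Measure.prod_restrict,
    lintegral_prod_mul hF.aemeasurable hΦ.aemeasurable]

theorem lintegral_comp_sq_add_sq {G : ℝ → ℝ≥0∞} (hG : Measurable G) :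
    ∫⁻ p : ℝ × ℝ, G (p.1 ^ 2 + p.2 ^ 2) =
      ENNReal.ofReal (2 * π) * ∫⁻ r in Ioi 0, ENNReal.ofReal r * G (r ^ 2) := by
  have h := setLIntegral_polarCoord_target_mul (Φ := fun _ => 1)
    (by fun_prop : Measurable fun r => ENNReal.ofReal r * G (r ^ 2)) measurable_const
  simp only [mul_one, setLIntegral_const, one_mul, volume_Ioo, sub_neg_eq_add] at h
  rw [← lintegral_comp_polarCoord_symm]
  simp_rw [sq_add_sq_polarCoord_symm, smul_eq_mul]
  rw [h, mul_comm, two_mul]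

theorem setLIntegral_sin_mul_comp_cos (H : ℝ → ℝ≥0∞) :
    ∫⁻ θ in Ioo (-π) π, ENNReal.ofReal (sin θ) * H (cos θ) = ∫⁻ t in Icc (-1) 1, H t := by
  have hneg : ∫⁻ θ in Ioc (-π) 0, ENNReal.ofReal (sin θ) * H (cos θ) = 0 := by
    rw [← lintegral_zero (μ := volume.restrict (Ioc (-π) 0))]
    refine setLIntegral_congr_fun measurableSet_Ioc fun θ hθ => ?_
    rw [ENNReal.ofReal_of_nonpos (sin_nonpos_of_nonpos_of_neg_pi_le hθ.2 hθ.1.le), zero_mul]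
  have hpos : ∫⁻ θ in Icc 0 π, ENNReal.ofReal (sin θ) * H (cos θ) = ∫⁻ t in Icc (-1) 1, H t := by
    rw [← bijOn_cos.image_eq, lintegral_image_eq_lintegral_deriv_mul_of_antitoneOn measurableSet_Icc
      (fun θ _ => (hasDerivAt_cos θ).hasDerivWithinAt) antitoneOn_cos]
    simp only [neg_neg]
  rw [← Ioc_union_Ioo_eq_Ioo (neg_nonpos.2 pi_pos.le) pi_pos,
    lintegral_union measurableSet_Ioo (Ioc_disjoint_Ioi_same.mono_right Ioo_subset_Ioi_self),
    hneg, zero_add, setLIntegral_congr Ioo_ae_eq_Icc, hpos]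

theorem lintegral_ofReal_snd_mul_radial_mul_comp_fst_div_sqrt {g H : ℝ → ℝ≥0∞}
    (hg : Measurable g) (hH : Measurable H) :
    ∫⁻ p : ℝ × ℝ, ENNReal.ofReal p.2 * g (p.1 ^ 2 + p.2 ^ 2) * H (p.1 / √(p.1 ^ 2 + p.2 ^ 2)) =
      (∫⁻ ρ in Ioi 0, ENNReal.ofReal (ρ ^ 2) * g (ρ ^ 2)) * ∫⁻ t in Icc (-1) 1, H t := by
  rw [← lintegral_comp_polarCoord_symm, ← setLIntegral_sin_mul_comp_cos,
    ← setLIntegral_polarCoord_target_mul (by fun_prop) (by fun_prop)]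
  refine setLIntegral_congr_fun polarCoord.open_target.measurableSet fun ⟨ρ, θ⟩ hq => ?_
  have hρ : 0 < ρ := hq.1
  rw [smul_eq_mul, sq_add_sq_polarCoord_symm]
  simp only [polarCoord_symm_apply]
  rw [sqrt_sq hρ.le, mul_div_cancel_left₀ _ hρ.ne', ENNReal.ofReal_mul hρ.le,
    ENNReal.ofReal_pow hρ.le]
  ring

noncomputable def normalizedFst (x : ℝ × ℝ × ℝ) : ℝ := x.1 / √(x.1 ^ 2 + x.2.1 ^ 2 + x.2.2 ^ 2)

@[fun_prop]
theorem measurable_normalizedFst : Measurable normalizedFst := by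
  unfold normalizedFst; fun_prop

theorem lintegral_radial_mul_comp_normalizedFst {g H : ℝ → ℝ≥0∞}
    (hg : Measurable g) (hH : Measurable H) :
    ∫⁻ x : ℝ × ℝ × ℝ, g (x.1 ^ 2 + x.2.1 ^ 2 + x.2.2 ^ 2) * H (normalizedFst x) =
      ENNReal.ofReal (2 * π) * (∫⁻ ρ in Ioi 0, ENNReal.ofReal (ρ ^ 2) * g (ρ ^ 2)) *
        ∫⁻ t in Icc (-1) 1, H t := by
  have hcyl : ∀ a : ℝ, ∫⁻ q : ℝ × ℝ, g (a ^ 2 + q.1 ^ 2 + q.2 ^ 2) * H (normalizedFst (a, q)) =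
      ENNReal.ofReal (2 * π) * ∫⁻ r, ENNReal.ofReal r * (g (a ^ 2 + r ^ 2) *
        H (a / √(a ^ 2 + r ^ 2))) := by
    intro a
    simp_rw [normalizedFst, add_assoc]
    rw [lintegral_comp_sq_add_sq (G := fun s => g (a ^ 2 + s) * H (a / √(a ^ 2 + s)))
      (by fun_prop), setLIntegral_eq_of_support_subset]
    refine Function.support_subset_iff'.2 fun r hr => ?_
    simp only [ENNReal.ofReal_of_nonpos (not_lt.1 hr), zero_mul]
  rw [Measure.volume_eq_prod, lintegral_prod _ (by fun_prop)]
  simp_rw [hcyl]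
  rw [lintegral_const_mul' _ _ ENNReal.ofReal_ne_top, mul_assoc,
    ← lintegral_ofReal_snd_mul_radial_mul_comp_fst_div_sqrt hg hH, Measure.volume_eq_prod,
    lintegral_prod _ (by fun_prop)]
  simp_rw [mul_assoc]

theorem map_normalizedFst_withDensity_radial {g : ℝ → ℝ≥0∞} (hg : Measurable g) :
    ((volume : Measure (ℝ × ℝ × ℝ)).withDensity fun x => g (x.1 ^ 2 + x.2.1 ^ 2 + x.2.2 ^ 2)).map
        normalizedFst =
      (ENNReal.ofReal (2 * π) * ∫⁻ ρ in Ioi 0, ENNReal.ofReal (ρ ^ 2) * g (ρ ^ 2)) •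
        volume.restrict (Icc (-1) 1) := by
  refine Measure.ext_of_lintegral _ fun f hf => ?_
  rw [lintegral_map hf measurable_normalizedFst,
    lintegral_withDensity_eq_lintegral_mul _ (by fun_prop) (by fun_prop), lintegral_smul_measure]
  exact lintegral_radial_mul_comp_normalizedFst hg hf

theorem map_pi_fin_three {α : Type*} [MeasurableSpace α] (μ : Measure α) [SigmaFinite μ] :
    (Measure.pi fun _ : Fin 3 => μ).map (fun x => (x 0, x 1, x 2)) = μ.prod (μ.prod μ) :=
  (((MeasurePreserving.id μ).prod (measurePreserving_piFinTwo fun _ => μ)).comp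
    (measurePreserving_piFinSuccAbove (fun _ : Fin 3 => μ) 0)).map_eq

theorem gaussianReal_prod_prod :
    (gaussianReal 0 1).prod ((gaussianReal 0 1).prod (gaussianReal 0 1)) =
      volume.withDensity fun x : ℝ × ℝ × ℝ =>
        ENNReal.ofReal ((√(2 * π))⁻¹ ^ 3 * exp (-(x.1 ^ 2 + x.2.1 ^ 2 + x.2.2 ^ 2) / 2)) := by
  rw [gaussianReal_of_var_ne_zero _ one_ne_zero, prod_withDensity (measurable_gaussianPDF _ _)
    (measurable_gaussianPDF _ _), prod_withDensity (measurable_gaussianPDF _ _) (by fun_prop)]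
  congr 1
  funext x
  simp only [gaussianPDF_def, gaussianPDFReal_def, NNReal.coe_one, mul_one, sub_zero]
  rw [← ENNReal.ofReal_mul (by positivity), ← ENNReal.ofReal_mul (by positivity)]
  have hexp : exp (-(x.1 ^ 2 + x.2.1 ^ 2 + x.2.2 ^ 2) / 2) =
      exp (-x.1 ^ 2 / 2) * (exp (-x.2.1 ^ 2 / 2) * exp (-x.2.2 ^ 2 / 2)) := by
    rw [← exp_add, ← exp_add]
    ring_nf
  rw [hexp]
  ring_nf

theorem eq_uniform_Icc_of_eq_smul_restrict {μ : Measure ℝ} [IsProbabilityMeasure μ] {C : ℝ≥0∞}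
    (h : μ = C • volume.restrict (Icc (-1) 1)) :
    μ = (volume.restrict (Icc (-1) 1)).withDensity fun _ => ENNReal.ofReal (1 / 2) := by
  have hC : C * 2 = 1 := by
    simpa [one_add_one_eq_two] using (congrArg (· univ) h).symm
  rw [withDensity_const, h, ENNReal.eq_inv_of_mul_eq_one_left hC, one_div,
    ENNReal.ofReal_inv_of_pos two_pos, ENNReal.ofReal_ofNat]

/-- Probabilistic Archimedes: if `(N₁, N₂, N₃)` are i.i.d. standard Gaussians,
then `N₁ / √(N₁² + N₂² + N₃²)` is uniformly distributed on `[-1, 1]`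
(density `1/2` w.r.t. Lebesgue measure restricted to `[-1, 1]`). -/
theorem gaussian_normalized_coordinate_uniform :
    (Measure.pi (fun _ : Fin 3 => gaussianReal 0 1)).map
        (fun x => x 0 / Real.sqrt ((x 0) ^ 2 + (x 1) ^ 2 + (x 2) ^ 2)) =
      ((volume : Measure ℝ).restrict (Set.Icc (-1) 1)).withDensity
        (fun _ => ENNReal.ofReal (1 / 2)) := by
  have hc := map_normalizedFst_withDensity_radial
    (g := fun s => ENNReal.ofReal ((√(2 * π))⁻¹ ^ 3 * exp (-s / 2))) (by fun_prop)
  rw [← gaussianReal_prod_prod, ← map_pi_fin_three, Measure.map_map measurable_normalizedFst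
    (by fun_prop)] at hc
  have := Measure.isProbabilityMeasure_map (μ := Measure.pi fun _ : Fin 3 => gaussianReal 0 1)
    (measurable_normalizedFst.comp (f := fun x => (x 0, x 1, x 2)) (by fun_prop)).aemeasurable
  exact (eq_uniform_Icc_of_eq_smul_restrict hc :)
end

section
/- Let Λ₁, Λ₂ > 0, let μ₁ ∈ (−Λ₁, Λ₁) and μ₂ ∈ (−Λ₂, Λ₂), and let θ₁, θ₂ ∈ ℝ with e^{iθ₁} ≠ −e^{iθ₂}. For r > 0 set A_j(r) = e^{rΛ_j} + e^{−rΛ_j} − e^{rμ_j} − e^{−rμ_j} (which is nonnegative) for j = 1, 2, and W(r) = e^{iθ₁}·√(A₁(r))·e^{rμ₂/2} + e^{iθ₂}·e^{−rμ₁/2}·√(A₂(r)) ∈ ℂ. Then (1/r)·Argcosh(cosh(r·(μ₁ + μ₂)) + |W(r)|²/2) tends to max(Λ₁ + μ₂, Λ₂ − μ₁) as r → +∞. -/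
open Filter Real Complex

/-- `Argcosh x = log(x + √(x² - 1))`, the inverse of `cosh` on `[1, ∞)`. -/
noncomputable def argcosh (x : ℝ) : ℝ := Real.log (x + Real.sqrt (x ^ 2 - 1))

/- Auxiliary lemmas -/

lemma argcosh_ge' (x : ℝ) (hx : 1 ≤ x) : Real.log x ≤ argcosh x := by
  apply Real.log_le_log (by linarith)
  nlinarith [Real.sqrt_nonneg (x ^ 2 - 1)]

lemma argcosh_le' (x : ℝ) (hx : 1 ≤ x) : argcosh x ≤ Real.log (2 * x) := by
  apply Real.log_le_log (by positivity)
  have h1 : Real.sqrt (x ^ 2 - 1) ≤ Real.sqrt (x ^ 2) := Real.sqrt_le_sqrt (by linarith)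
  rw [Real.sqrt_sq (by linarith)] at h1
  linarith

lemma squeeze_argcosh (f : ℝ → ℝ) (M c C : ℝ) (hc : 0 < c) (hC : 0 < C)
    (h1 : ∀ᶠ r in atTop, 1 ≤ f r)
    (hlo : ∀ᶠ r in atTop, c * Real.exp (r * M) ≤ f r)
    (hhi : ∀ᶠ r in atTop, f r ≤ C * Real.exp (r * M)) :
    Tendsto (fun r => (1 / r) * argcosh (f r)) atTop (nhds M) := by
  have hglo : Tendsto (fun r : ℝ => Real.log c / r + M) atTop (nhds M) := by
    have := (tendsto_const_nhds (x := Real.log c) (f := atTop (α := ℝ))).div_atTop tendsto_id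
    simpa using this.add_const M
  have hghi : Tendsto (fun r : ℝ => Real.log (2 * C) / r + M) atTop (nhds M) := by
    have := (tendsto_const_nhds (x := Real.log (2 * C)) (f := atTop (α := ℝ))).div_atTop tendsto_id
    simpa using this.add_const M
  refine tendsto_of_tendsto_of_tendsto_of_le_of_le' hglo hghi ?_ ?_
  · filter_upwards [h1, hlo, eventually_ge_atTop (1 : ℝ)] with r h1 hlo hr
    have hr0 : 0 < r := by linarith
    have key : Real.log c + r * M ≤ argcosh (f r) := by
      have ha := argcosh_ge' (f r) h1
      have h2 : Real.log (c * Real.exp (r * M)) ≤ Real.log (f r) :=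
        Real.log_le_log (by positivity) hlo
      rw [Real.log_mul (ne_of_gt hc) (Real.exp_ne_zero _), Real.log_exp] at h2
      linarith
    have := mul_le_mul_of_nonneg_left key (le_of_lt (one_div_pos.mpr hr0))
    have heq : (1 / r) * (Real.log c + r * M) = Real.log c / r + M := by
      field_simp
    linarith
  · filter_upwards [h1, hhi, eventually_ge_atTop (1 : ℝ)] with r h1 hhi hr
    have hr0 : 0 < r := by linarith
    have key : argcosh (f r) ≤ Real.log (2 * C) + r * M := by
      have ha := argcosh_le' (f r) h1
      have h2 : Real.log (2 * f r) ≤ Real.log (2 * (C * Real.exp (r * M))) :=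
        Real.log_le_log (by linarith) (by linarith)
      rw [show 2 * (C * Real.exp (r * M)) = (2 * C) * Real.exp (r * M) by ring,
        Real.log_mul (by positivity) (Real.exp_ne_zero _), Real.log_exp] at h2
      linarith
    have := mul_le_mul_of_nonneg_left key (le_of_lt (one_div_pos.mpr hr0))
    have heq : (1 / r) * (Real.log (2 * C) + r * M) = Real.log (2 * C) / r + M := by
      field_simp
    linarith

lemma normSq_expand (θ₁ θ₂ s t : ℝ) :
    Complex.normSq (Complex.exp (θ₁ * Complex.I) * (s : ℂ) +
        Complex.exp (θ₂ * Complex.I) * (t : ℂ)) =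
      s ^ 2 + t ^ 2 + 2 * Real.cos (θ₁ - θ₂) * s * t := by
  rw [Complex.normSq_add]
  have h1 : ∀ θ : ℝ, Complex.normSq (Complex.exp (θ * Complex.I)) = 1 := by
    intro θ
    rw [Complex.normSq_eq_norm_sq, Complex.norm_exp_ofReal_mul_I]; norm_num
  have h2 : Complex.exp (θ₁ * Complex.I) * (s : ℂ) *
        (starRingEnd ℂ) (Complex.exp (θ₂ * Complex.I) * (t : ℂ))
      = Complex.exp (((θ₁ - θ₂ : ℝ) : ℂ) * Complex.I) * ((s * t : ℝ) : ℂ) := by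
    rw [map_mul, ← Complex.exp_conj]
    have h3 : (starRingEnd ℂ) ((θ₂ : ℂ) * Complex.I) = -(θ₂ : ℂ) * Complex.I := by
      simp [Complex.conj_I]
    rw [h3, Complex.conj_ofReal,
      show ((θ₁ - θ₂ : ℝ) : ℂ) * Complex.I = (θ₁ : ℂ) * Complex.I + -(θ₂ : ℂ) * Complex.I by
        push_cast; ring, Complex.exp_add]
    push_cast; ring
  rw [Complex.normSq_mul, Complex.normSq_mul, h1, h1, h2, Complex.mul_re,
    Complex.exp_ofReal_mul_I_re, Complex.exp_ofReal_mul_I_im]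
  simp [Complex.normSq_ofReal]
  ring

lemma cos_gt_neg_one (θ₁ θ₂ : ℝ)
    (hθ : Complex.exp (θ₁ * Complex.I) ≠ -Complex.exp (θ₂ * Complex.I)) :
    -1 < Real.cos (θ₁ - θ₂) := by
  rcases lt_or_eq_of_le (Real.neg_one_le_cos (θ₁ - θ₂)) with h | h
  · exact h
  exfalso
  apply hθ
  have hsin : Real.sin (θ₁ - θ₂) = 0 := by
    have := Real.sin_sq_add_cos_sq (θ₁ - θ₂)
    nlinarith
  have hexp : Complex.exp (((θ₁ - θ₂ : ℝ) : ℂ) * Complex.I) = -1 := by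
    rw [Complex.exp_mul_I, ← Complex.ofReal_cos, ← Complex.ofReal_sin, hsin, ← h]
    push_cast; ring
  have heq : (θ₁ : ℂ) * Complex.I = ((θ₁ - θ₂ : ℝ) : ℂ) * Complex.I + (θ₂ : ℂ) * Complex.I := by
    push_cast; ring
  rw [heq, Complex.exp_add, hexp]
  ring

noncomputable def Afun (Λ μ r : ℝ) : ℝ :=
  Real.exp (r * Λ) + Real.exp (-(r * Λ)) - Real.exp (r * μ) - Real.exp (-(r * μ))

lemma cosh2_mono (a b : ℝ) (h : |a| ≤ b) :
    Real.exp a + Real.exp (-a) ≤ Real.exp b + Real.exp (-b) := by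
  have habs : Real.exp a + Real.exp (-a) = Real.exp |a| + Real.exp (-|a|) := by
    rcases abs_cases a with ⟨h1, _⟩ | ⟨h1, _⟩ <;> rw [h1] <;> ring_nf
  rw [habs, Real.exp_neg, Real.exp_neg]
  set x := Real.exp |a| with hx
  set y := Real.exp b with hy
  have hx1 : 1 ≤ x := Real.one_le_exp (abs_nonneg a)
  have hxy : x ≤ y := Real.exp_le_exp.2 h
  have hx0 : 0 < x := by linarith
  have hy0 : 0 < y := by linarith
  have key : x⁻¹ - y⁻¹ = (y - x) / (x * y) := by field_simp
  have h2 : (y - x) / (x * y) ≤ y - x :=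
    div_le_self (by linarith) (by nlinarith)
  linarith

lemma Afun_nonneg (Λ μ r : ℝ) (h : |μ| ≤ Λ) (hr : 0 ≤ r) : 0 ≤ Afun Λ μ r := by
  have := cosh2_mono (r * μ) (r * Λ) (by
    rw [abs_mul, _root_.abs_of_nonneg hr]
    exact mul_le_mul_of_nonneg_left h hr)
  unfold Afun; linarith

lemma Afun_le (Λ μ r : ℝ) (hΛ : 0 ≤ Λ) (hr : 0 ≤ r) : Afun Λ μ r ≤ Real.exp (r * Λ) := by
  have h1 : Real.exp (-(r * Λ)) ≤ 1 := Real.exp_le_one_iff.2 (by nlinarith)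
  have hp : Real.exp (r * μ) * Real.exp (-(r * μ)) = 1 := by
    rw [← Real.exp_add]; simp
  have h2 : 2 ≤ Real.exp (r * μ) + Real.exp (-(r * μ)) := by
    nlinarith [sq_nonneg (Real.exp (r * μ) - Real.exp (-(r * μ))),
      Real.exp_pos (r * μ), Real.exp_pos (-(r * μ))]
  unfold Afun; linarith

lemma Afun_half (Λ μ : ℝ) (h : |μ| < Λ) :
    ∀ᶠ r in atTop, Real.exp (r * Λ) / 2 ≤ Afun Λ μ r := by
  have hd : 0 < Λ - |μ| := by linarith
  filter_upwards [eventually_ge_atTop (max 0 (Real.log 4 / (Λ - |μ|)))] with r hr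
  have hr0 : 0 ≤ r := le_trans (le_max_left _ _) hr
  have h4 : (4 : ℝ) ≤ Real.exp (r * (Λ - |μ|)) := by
    rw [show (4 : ℝ) = Real.exp (Real.log 4) by rw [Real.exp_log]; norm_num]
    apply Real.exp_le_exp.2
    have := le_trans (le_max_right 0 (Real.log 4 / (Λ - |μ|))) hr
    rw [div_le_iff₀ hd] at this
    linarith [this]
  have he1 : Real.exp (r * μ) ≤ Real.exp (r * |μ|) :=
    Real.exp_le_exp.2 (mul_le_mul_of_nonneg_left (le_abs_self μ) hr0)
  have he2 : Real.exp (-(r * μ)) ≤ Real.exp (r * |μ|) := by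
    apply Real.exp_le_exp.2
    rw [show -(r * μ) = r * (-μ) by ring]
    exact mul_le_mul_of_nonneg_left (neg_le_abs μ) hr0
  have hsplit : Real.exp (r * Λ) = Real.exp (r * |μ|) * Real.exp (r * (Λ - |μ|)) := by
    rw [← Real.exp_add]; ring_nf
  have hkey : Real.exp (r * |μ|) * 4 ≤ Real.exp (r * |μ|) * Real.exp (r * (Λ - |μ|)) :=
    mul_le_mul_of_nonneg_left h4 (Real.exp_pos _).le
  unfold Afun
  nlinarith [Real.exp_pos (-(r * Λ)), Real.exp_pos (r * |μ|)]

lemma quad_lower (c0 s t : ℝ) (hc0a : -1 ≤ c0) (hc0b : c0 ≤ 1) (hs : 0 ≤ s) (ht : 0 ≤ t) :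
    (1 + c0) / 2 * (s ^ 2 + t ^ 2) ≤ s ^ 2 + t ^ 2 + 2 * c0 * s * t := by
  nlinarith [mul_nonneg (mul_nonneg hs ht) (by linarith : (0:ℝ) ≤ 1 + c0),
    mul_nonneg (by linarith : (0:ℝ) ≤ 1 - c0) (sq_nonneg (s - t))]

lemma quad_upper (c0 s t : ℝ) (hc0b : c0 ≤ 1) (hs : 0 ≤ s) (ht : 0 ≤ t) :
    s ^ 2 + t ^ 2 + 2 * c0 * s * t ≤ 2 * (s ^ 2 + t ^ 2) := by
  nlinarith [sq_nonneg (s - t), mul_nonneg hs ht]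

/-- Crystallization of the radial coordinate of a product of two dressing-orbit
elements: with `A_j(r) = e^{rΛ_j} + e^{-rΛ_j} - e^{rμ_j} - e^{-rμ_j}` and
`W(r) = e^{iθ₁}√(A₁(r))e^{rμ₂/2} + e^{iθ₂}e^{-rμ₁/2}√(A₂(r))`, one has
`(1/r)·Argcosh(cosh(r(μ₁+μ₂)) + |W(r)|²/2) → max(Λ₁+μ₂, Λ₂-μ₁)` as `r → ∞`. -/
theorem crystal_highest_weight_limit
    (Λ₁ Λ₂ μ₁ μ₂ θ₁ θ₂ : ℝ)
    (hΛ₁ : 0 < Λ₁) (hΛ₂ : 0 < Λ₂)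
    (hμ₁ : μ₁ ∈ Set.Ioo (-Λ₁) Λ₁) (hμ₂ : μ₂ ∈ Set.Ioo (-Λ₂) Λ₂)
    (hθ : Complex.exp (θ₁ * Complex.I) ≠ -Complex.exp (θ₂ * Complex.I)) :
    Tendsto
      (fun r : ℝ =>
        (1 / r) * argcosh
          (Real.cosh (r * (μ₁ + μ₂)) +
            Complex.normSq
              (Complex.exp (θ₁ * Complex.I) *
                  (Real.sqrt (Real.exp (r * Λ₁) + Real.exp (-(r * Λ₁)) -
                      Real.exp (r * μ₁) - Real.exp (-(r * μ₁))) : ℝ) *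
                  Complex.exp ((r * μ₂ / 2 : ℝ) : ℂ) +
                Complex.exp (θ₂ * Complex.I) *
                  Complex.exp ((-(r * μ₁) / 2 : ℝ) : ℂ) *
                  (Real.sqrt (Real.exp (r * Λ₂) + Real.exp (-(r * Λ₂)) -
                      Real.exp (r * μ₂) - Real.exp (-(r * μ₂))) : ℝ)) / 2))
      atTop (nhds (max (Λ₁ + μ₂) (Λ₂ - μ₁))) := by
  obtain ⟨hμ₁l, hμ₁r⟩ := hμ₁
  obtain ⟨hμ₂l, hμ₂r⟩ := hμ₂
  have habs1 : |μ₁| < Λ₁ := abs_lt.2 ⟨hμ₁l, hμ₁r⟩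
  have habs2 : |μ₂| < Λ₂ := abs_lt.2 ⟨hμ₂l, hμ₂r⟩
  set M := max (Λ₁ + μ₂) (Λ₂ - μ₁) with hMdef
  have hM1 : Λ₁ + μ₂ ≤ M := le_max_left _ _
  have hM2 : Λ₂ - μ₁ ≤ M := le_max_right _ _
  have hc0a : -1 < Real.cos (θ₁ - θ₂) := cos_gt_neg_one θ₁ θ₂ hθ
  have hc0b : Real.cos (θ₁ - θ₂) ≤ 1 := Real.cos_le_one (θ₁ - θ₂)
  set c0 := Real.cos (θ₁ - θ₂) with hc0def
  set s : ℝ → ℝ := fun r => Real.sqrt (Afun Λ₁ μ₁ r) * Real.exp (r * μ₂ / 2) with hsdef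
  set t : ℝ → ℝ := fun r => Real.exp (-(r * μ₁) / 2) * Real.sqrt (Afun Λ₂ μ₂ r) with htdef
  set F : ℝ → ℝ := fun r =>
    Real.cosh (r * (μ₁ + μ₂)) +
      (s r ^ 2 + t r ^ 2 + 2 * c0 * s r * t r) / 2 with hFdef
  have hsnn : ∀ r, 0 ≤ s r := fun r =>
    mul_nonneg (Real.sqrt_nonneg _) (Real.exp_pos _).le
  have htnn : ∀ r, 0 ≤ t r := fun r =>
    mul_nonneg (Real.exp_pos _).le (Real.sqrt_nonneg _)
  -- squares of s and t
  have hs2 : ∀ r, 0 ≤ r → s r ^ 2 = Afun Λ₁ μ₁ r * Real.exp (r * μ₂) := by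
    intro r hr
    have hA := Afun_nonneg Λ₁ μ₁ r habs1.le hr
    rw [hsdef]
    simp only
    rw [mul_pow, Real.sq_sqrt hA, pow_two, ← Real.exp_add,
      show r * μ₂ / 2 + r * μ₂ / 2 = r * μ₂ by ring]
  have ht2 : ∀ r, 0 ≤ r → t r ^ 2 = Real.exp (-(r * μ₁)) * Afun Λ₂ μ₂ r := by
    intro r hr
    have hA := Afun_nonneg Λ₂ μ₂ r habs2.le hr
    rw [htdef]
    simp only
    rw [mul_pow, Real.sq_sqrt hA, pow_two, ← Real.exp_add,
      show -(r * μ₁) / 2 + -(r * μ₁) / 2 = -(r * μ₁) by ring]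
  have hk : 0 < (1 + c0) / 2 := by linarith
  -- main tendsto for F
  have main : Tendsto (fun r => (1 / r) * argcosh (F r)) atTop (nhds M) := by
    apply squeeze_argcosh F M ((1 + c0) / 8) 3 (by linarith) (by norm_num)
    · -- 1 ≤ F
      filter_upwards with r
      have hq := quad_lower c0 (s r) (t r) hc0a.le hc0b (hsnn r) (htnn r)
      have hcosh := Real.one_le_cosh (r * (μ₁ + μ₂))
      have hsq : 0 ≤ s r ^ 2 + t r ^ 2 := by positivity
      rw [hFdef]
      simp only
      nlinarith [mul_nonneg hk.le hsq]
    · -- lower bound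
      filter_upwards [Afun_half Λ₁ μ₁ habs1, Afun_half Λ₂ μ₂ habs2,
        eventually_ge_atTop (0 : ℝ)] with r hA1 hA2 hr0
      have hq := quad_lower c0 (s r) (t r) hc0a.le hc0b (hsnn r) (htnn r)
      have hcosh := Real.one_le_cosh (r * (μ₁ + μ₂))
      rcases max_cases (Λ₁ + μ₂) (Λ₂ - μ₁) with ⟨h1, _⟩ | ⟨h1, _⟩
      · -- M = Λ₁ + μ₂, use s²
        have hsr2 : Real.exp (r * M) / 2 ≤ s r ^ 2 := by
          rw [hs2 r hr0]
          have : Real.exp (r * Λ₁) / 2 * Real.exp (r * μ₂) ≤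
              Afun Λ₁ μ₁ r * Real.exp (r * μ₂) :=
            mul_le_mul_of_nonneg_right hA1 (Real.exp_pos _).le
          have hM' : M = Λ₁ + μ₂ := hMdef.trans h1
          calc Real.exp (r * M) / 2 = Real.exp (r * Λ₁) / 2 * Real.exp (r * μ₂) := by
                rw [div_mul_eq_mul_div, ← Real.exp_add, hM']; ring_nf
            _ ≤ _ := this
        have htr2 : 0 ≤ t r ^ 2 := sq_nonneg _
        rw [hFdef]
        simp only
        nlinarith [mul_le_mul_of_nonneg_left hsr2 hk.le,
          mul_nonneg hk.le htr2]
      · -- M = Λ₂ - μ₁, use t²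
        have htr2 : Real.exp (r * M) / 2 ≤ t r ^ 2 := by
          rw [ht2 r hr0]
          have : Real.exp (-(r * μ₁)) * (Real.exp (r * Λ₂) / 2) ≤
              Real.exp (-(r * μ₁)) * Afun Λ₂ μ₂ r :=
            mul_le_mul_of_nonneg_left hA2 (Real.exp_pos _).le
          have hM' : M = Λ₂ - μ₁ := hMdef.trans h1
          calc Real.exp (r * M) / 2 = Real.exp (-(r * μ₁)) * (Real.exp (r * Λ₂) / 2) := by
                rw [mul_div_assoc', ← Real.exp_add, hM']; ring_nf
            _ ≤ _ := this
        have hsr2 : 0 ≤ s r ^ 2 := sq_nonneg _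
        rw [hFdef]
        simp only
        nlinarith [mul_le_mul_of_nonneg_left htr2 hk.le,
          mul_nonneg hk.le hsr2]
    · -- upper bound
      filter_upwards [eventually_ge_atTop (0 : ℝ)] with r hr0
      have hq := quad_upper c0 (s r) (t r) hc0b (hsnn r) (htnn r)
      have hcosh : Real.cosh (r * (μ₁ + μ₂)) ≤ Real.exp (r * M) := by
        rw [Real.cosh_eq]
        have e1 : Real.exp (r * (μ₁ + μ₂)) ≤ Real.exp (r * M) :=
          Real.exp_le_exp.2 (mul_le_mul_of_nonneg_left (by linarith) hr0)
        have e2 : Real.exp (-(r * (μ₁ + μ₂))) ≤ Real.exp (r * M) := by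
          apply Real.exp_le_exp.2
          rw [show -(r * (μ₁ + μ₂)) = r * (-(μ₁ + μ₂)) by ring]
          exact mul_le_mul_of_nonneg_left (by linarith) hr0
        linarith
      have hsb : s r ^ 2 ≤ Real.exp (r * M) := by
        rw [hs2 r hr0]
        calc Afun Λ₁ μ₁ r * Real.exp (r * μ₂)
            ≤ Real.exp (r * Λ₁) * Real.exp (r * μ₂) :=
              mul_le_mul_of_nonneg_right (Afun_le Λ₁ μ₁ r hΛ₁.le hr0) (Real.exp_pos _).le
          _ = Real.exp (r * (Λ₁ + μ₂)) := by rw [← Real.exp_add]; ring_nf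
          _ ≤ Real.exp (r * M) :=
              Real.exp_le_exp.2 (mul_le_mul_of_nonneg_left hM1 hr0)
      have htb : t r ^ 2 ≤ Real.exp (r * M) := by
        rw [ht2 r hr0]
        calc Real.exp (-(r * μ₁)) * Afun Λ₂ μ₂ r
            ≤ Real.exp (-(r * μ₁)) * Real.exp (r * Λ₂) :=
              mul_le_mul_of_nonneg_left (Afun_le Λ₂ μ₂ r hΛ₂.le hr0) (Real.exp_pos _).le
          _ = Real.exp (r * (Λ₂ - μ₁)) := by rw [← Real.exp_add]; ring_nf
          _ ≤ Real.exp (r * M) :=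
              Real.exp_le_exp.2 (mul_le_mul_of_nonneg_left hM2 hr0)
      rw [hFdef]
      simp only
      linarith
  -- transfer to the original expression
  apply main.congr
  intro r
  congr 2
  rw [hFdef]
  simp only
  congr 1
  have harg : Complex.exp (θ₁ * Complex.I) *
        (Real.sqrt (Real.exp (r * Λ₁) + Real.exp (-(r * Λ₁)) -
            Real.exp (r * μ₁) - Real.exp (-(r * μ₁))) : ℝ) *
        Complex.exp ((r * μ₂ / 2 : ℝ) : ℂ) +
      Complex.exp (θ₂ * Complex.I) *
        Complex.exp ((-(r * μ₁) / 2 : ℝ) : ℂ) *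
        (Real.sqrt (Real.exp (r * Λ₂) + Real.exp (-(r * Λ₂)) -
            Real.exp (r * μ₂) - Real.exp (-(r * μ₂))) : ℝ)
      = Complex.exp (θ₁ * Complex.I) * ((s r : ℝ) : ℂ) +
        Complex.exp (θ₂ * Complex.I) * ((t r : ℝ) : ℂ) := by
    rw [hsdef, htdef]
    simp only [Afun, Complex.ofReal_mul, ← Complex.ofReal_exp]
    ring
  rw [harg, normSq_expand, hc0def]
end

section
/- Let Λ₁, Λ₂ > 0 and let φ, ψ : ℝ → ℝ be continuous. For r > 0 and (μ₁, μ₂, θ₁, θ₂) ∈ [−Λ₁, Λ₁]×[−Λ₂, Λ₂]×[0, 2π]², set A_j(r, μ_j) = e^{rΛ_j} + e^{−rΛ_j} − e^{rμ_j} − e^{−rμ_j}, W_r = e^{iθ₁}·√(A₁(r, μ₁))·e^{rμ₂/2} + e^{iθ₂}·e^{−rμ₁/2}·√(A₂(r, μ₂)), and L_r(μ₁, μ₂, θ₁, θ₂) = (1/r)·Argcosh(cosh(r(μ₁ + μ₂)) + |W_r|²/2). Then (1/(4Λ₁Λ₂·4π²))·∫_{−Λ₁}^{Λ₁}∫_{−Λ₂}^{Λ₂}∫_0^{2π}∫_0^{2π}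 φ(L_r(μ₁, μ₂, θ₁, θ₂))·ψ(μ₁ + μ₂) dθ₁ dθ₂ dμ₂ dμ₁ converges, as r → +∞, to (1/(4Λ₁Λ₂))·∫_{−Λ₁}^{Λ₁}∫_{−Λ₂}^{Λ₂} φ(max(Λ₁ + μ₂, Λ₂ − μ₁))·ψ(μ₁ + μ₂) dμ₂ dμ₁. -/
/-!
Fix weights with `|μⱼ| < Λⱼ` and `Λ₁ + μ₂ ≠ Λ₂ - μ₁`. Every quantity entering `cosh (r L_r)`
grows like `exp (r ρ)` for some rate `ρ`, and rates obey tropical arithmetic: products add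
them, sums take their maximum, and a difference keeps the larger one when the two differ.
Thus `A_j` has rate `Λⱼ`, the two summands of `W_r` have rates `(Λ₁ + μ₂) / 2` and
`(Λ₂ - μ₁) / 2`, and `cosh (r L_r)` has rate `max (Λ₁ + μ₂) (Λ₂ - μ₁)`; as
`argcosh x = log x + O(1)`, `L_r` tends to this maximum. The excluded weights are null, and
`L_r` stays in a fixed compact interval for `r ≥ 1`, so dominated convergence carries the
limit through the four iterated integrals, the angles contributing the factor `4π²`.
-/

open Filter Real Complex MeasureTheory

open scoped Topology Interval

lemma log_le_argcosh {x : ℝ} (hx : 0 < x) : Real.log x ≤ argcosh x :=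
  log_le_log hx (le_add_of_nonneg_right (Real.sqrt_nonneg _))

lemma argcosh_le_log_two_mul {x : ℝ} (hx : 0 < x) : argcosh x ≤ Real.log (2 * x) := by
  have hs : √(x ^ 2 - 1) ≤ x := by
    simpa [Real.sqrt_sq hx.le] using Real.sqrt_le_sqrt (by linarith : x ^ 2 - 1 ≤ x ^ 2)
  exact log_le_log (by positivity) (by linarith)

lemma argcosh_nonneg {x : ℝ} (hx : 1 ≤ x) : 0 ≤ argcosh x :=
  (Real.log_nonneg hx).trans (log_le_argcosh (by linarith))

lemma continuousOn_argcosh : ContinuousOn argcosh (Set.Ici 1) := by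
  refine ContinuousOn.log (by fun_prop) fun x (hx : 1 ≤ x) => ?_
  positivity

def HasExpGrowthRate (f : ℝ → ℝ) (M : ℝ) : Prop :=
  (∀ᶠ r in atTop, 0 < f r) ∧ Tendsto (fun r => Real.log (f r) / r) atTop (𝓝 M)

lemma hasExpGrowthRate_exp (M : ℝ) : HasExpGrowthRate (fun r => Real.exp (r * M)) M := by
  refine ⟨.of_forall fun r => Real.exp_pos _, tendsto_const_nhds.congr' ?_⟩
  filter_upwards [eventually_ne_atTop 0] with r hr
  rw [Real.log_exp, mul_div_cancel_left₀ _ hr]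

lemma hasExpGrowthRate_const {c : ℝ} (hc : 0 < c) : HasExpGrowthRate (fun _ => c) 0 :=
  ⟨.of_forall fun _ => hc, tendsto_const_nhds.div_atTop tendsto_id⟩

namespace HasExpGrowthRate

variable {f g h : ℝ → ℝ} {p q M : ℝ}

lemma of_le_of_le (hg : HasExpGrowthRate g M) (hh : HasExpGrowthRate h M)
    (hgf : ∀ᶠ r in atTop, g r ≤ f r) (hfh : ∀ᶠ r in atTop, f r ≤ h r) :
    HasExpGrowthRate f M := by
  have hf : ∀ᶠ r in atTop, 0 < f r := by
    filter_upwards [hg.1, hgf] with r h0 hle using h0.trans_le hle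
  refine ⟨hf, tendsto_of_tendsto_of_tendsto_of_le_of_le' hg.2 hh.2 ?_ ?_⟩
  · filter_upwards [hg.1, hgf, eventually_gt_atTop 0] with r h0 hle hr
    gcongr
  · filter_upwards [hf, hfh, eventually_gt_atTop 0] with r h0 hle hr
    gcongr

lemma mul (hf : HasExpGrowthRate f p) (hg : HasExpGrowthRate g q) :
    HasExpGrowthRate (fun r => f r * g r) (p + q) := by
  refine ⟨by filter_upwards [hf.1, hg.1] with r h1 h2 using mul_pos h1 h2,
    (hf.2.add hg.2).congr' ?_⟩
  filter_upwards [hf.1, hg.1] with r h1 h2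
  rw [Real.log_mul h1.ne' h2.ne', add_div]

lemma const_mul (hf : HasExpGrowthRate f M) {c : ℝ} (hc : 0 < c) :
    HasExpGrowthRate (fun r => c * f r) M := by
  simpa using (hasExpGrowthRate_const hc).mul hf

lemma pow (hf : HasExpGrowthRate f M) (n : ℕ) : HasExpGrowthRate (fun r => f r ^ n) (n * M) := by
  refine ⟨by filter_upwards [hf.1] with r h using pow_pos h n,
    (hf.2.const_mul (n : ℝ)).congr' ?_⟩
  filter_upwards [hf.1] with r h
  rw [Real.log_pow, mul_div_assoc]

lemma sqrt (hf : HasExpGrowthRate f M) : HasExpGrowthRate (fun r => √(f r)) (M / 2) := by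
  refine ⟨by filter_upwards [hf.1] with r h using Real.sqrt_pos.2 h,
    (hf.2.div_const 2).congr' ?_⟩
  filter_upwards [hf.1] with r h
  rw [Real.log_sqrt h.le, div_right_comm]

lemma max (hf : HasExpGrowthRate f p) (hg : HasExpGrowthRate g q) :
    HasExpGrowthRate (fun r => Max.max (f r) (g r)) (Max.max p q) := by
  refine ⟨by filter_upwards [hf.1] with r h using lt_max_of_lt_left h,
    (hf.2.max hg.2).congr' ?_⟩
  filter_upwards [hf.1, hg.1, eventually_gt_atTop 0] with r h1 h2 hr
  rw [max_div_div_right hr.le, (strictMonoOn_log.monotoneOn).map_max h1 h2]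

lemma add (hf : HasExpGrowthRate f p) (hg : HasExpGrowthRate g q) :
    HasExpGrowthRate (fun r => f r + g r) (Max.max p q) := by
  refine (hf.max hg).of_le_of_le ((hf.max hg).const_mul two_pos) ?_ ?_
  · filter_upwards [hf.1, hg.1] with r h1 h2
    exact max_le (by linarith) (by linarith)
  · filter_upwards with r
    linarith [le_max_left (f r) (g r), le_max_right (f r) (g r)]

lemma sub (hf : HasExpGrowthRate f p) (hg : HasExpGrowthRate g q) (hqp : q < p) :
    HasExpGrowthRate (fun r => f r - g r) p := by
  have hgap : Tendsto (fun r => r * ((Real.log 2 + Real.log (g r)) / r - Real.log (f r) / r))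
      atTop atBot := by
    refine tendsto_id.atTop_mul_neg (sub_neg.2 hqp) ?_
    simpa [add_div] using ((tendsto_const_nhds.div_atTop tendsto_id).add hg.2).sub hf.2
  have h2g : ∀ᶠ r in atTop, 2 * g r ≤ f r := by
    filter_upwards [hgap.eventually_lt_atBot 0, hf.1, hg.1, eventually_gt_atTop 0]
      with r hneg h1 h2 hr
    rw [← sub_div, mul_div_cancel₀ _ hr.ne', sub_neg, ← Real.log_mul two_ne_zero h2.ne'] at hneg
    exact ((Real.log_lt_log_iff (by positivity) h1).1 hneg).le
  refine (hf.const_mul one_half_pos).of_le_of_le hf ?_ ?_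
  · filter_upwards [h2g] with r h
    linarith
  · filter_upwards [hg.1] with r h
    linarith

lemma abs_sub (hf : HasExpGrowthRate f p) (hg : HasExpGrowthRate g q) (hpq : p ≠ q) :
    HasExpGrowthRate (fun r => |f r - g r|) (Max.max p q) := by
  rcases hpq.lt_or_gt with hlt | hlt
  · rw [max_eq_right hlt.le]
    refine (hg.sub hf hlt).of_le_of_le (by simpa [max_eq_right hlt.le] using hf.add hg) ?_ ?_
    · filter_upwards with r
      rw [abs_sub_comm]
      exact le_abs_self _
    · filter_upwards [hf.1, hg.1] with r h1 h2
      exact abs_sub_le_iff.2 ⟨by linarith, by linarith⟩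
  · rw [max_eq_left hlt.le]
    refine (hf.sub hg hlt).of_le_of_le (by simpa [max_eq_left hlt.le] using hf.add hg) ?_ ?_
    · filter_upwards with r
      exact le_abs_self _
    · filter_upwards [hf.1, hg.1] with r h1 h2
      exact abs_sub_le_iff.2 ⟨by linarith, by linarith⟩

lemma tendsto_argcosh_div (hf : HasExpGrowthRate f M) :
    Tendsto (fun r => argcosh (f r) / r) atTop (𝓝 M) := by
  have h2f := hf.const_mul two_pos
  refine tendsto_of_tendsto_of_tendsto_of_le_of_le' hf.2 h2f.2 ?_ ?_
  · filter_upwards [hf.1, eventually_gt_atTop 0] with r h hr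
    gcongr
    exact log_le_argcosh h
  · filter_upwards [hf.1, eventually_gt_atTop 0] with r h hr
    gcongr
    exact argcosh_le_log_two_mul h

end HasExpGrowthRate

lemma hasExpGrowthRate_cosh (s : ℝ) : HasExpGrowthRate (fun r => Real.cosh (r * s)) |s| := by
  have h := ((hasExpGrowthRate_exp s).add (hasExpGrowthRate_exp (-s))).const_mul one_half_pos
  convert h using 2 with r
  · rw [Real.cosh_eq, neg_mul_eq_mul_neg]
    ring
  · rw [abs_eq_max_neg]

lemma Real.cosh_le_exp_abs (x : ℝ) : Real.cosh x ≤ Real.exp |x| := by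
  rw [← Real.cosh_abs, Real.cosh_eq]
  have : Real.exp (-|x|) ≤ Real.exp |x| := Real.exp_le_exp.2 (by linarith [abs_nonneg x])
  linarith

/-- `orbitA`, `orbitW` and `radialCoord` are the `A_j`, `W_r` and `L_r` of the statement;
`radialCosh` is `cosh (r L_r)`. -/
noncomputable def orbitA (r Λ μ : ℝ) : ℝ :=
  Real.exp (r * Λ) + Real.exp (-(r * Λ)) - Real.exp (r * μ) - Real.exp (-(r * μ))

noncomputable def orbitW (r Λ₁ Λ₂ μ₁ μ₂ θ₁ θ₂ : ℝ) : ℂ :=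
  cexp (θ₁ * I) * (√(orbitA r Λ₁ μ₁) : ℝ) * cexp ((r * μ₂ / 2 : ℝ) : ℂ) +
    cexp (θ₂ * I) * cexp ((-(r * μ₁) / 2 : ℝ) : ℂ) * (√(orbitA r Λ₂ μ₂) : ℝ)

noncomputable def radialCosh (r Λ₁ Λ₂ μ₁ μ₂ θ₁ θ₂ : ℝ) : ℝ :=
  Real.cosh (r * (μ₁ + μ₂)) + normSq (orbitW r Λ₁ Λ₂ μ₁ μ₂ θ₁ θ₂) / 2

noncomputable def radialCoord (r Λ₁ Λ₂ μ₁ μ₂ θ₁ θ₂ : ℝ) : ℝ :=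
  1 / r * argcosh (radialCosh r Λ₁ Λ₂ μ₁ μ₂ θ₁ θ₂)

lemma orbitA_eq (r Λ μ : ℝ) : orbitA r Λ μ = 2 * (Real.cosh (r * Λ) - Real.cosh (r * μ)) := by
  rw [orbitA, Real.cosh_eq, Real.cosh_eq]
  ring

lemma orbitA_nonneg {r Λ μ : ℝ} (hr : 0 ≤ r) (hμ : |μ| ≤ Λ) : 0 ≤ orbitA r Λ μ := by
  have : Real.cosh (r * μ) ≤ Real.cosh (r * Λ) := by
    rw [Real.cosh_le_cosh, abs_mul, abs_mul, abs_of_nonneg hr,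
      abs_of_nonneg ((abs_nonneg μ).trans hμ)]
    exact mul_le_mul_of_nonneg_left hμ hr
  rw [orbitA_eq]
  linarith

lemma orbitA_le (r Λ μ : ℝ) : orbitA r Λ μ ≤ 2 * Real.exp |r * Λ| := by
  rw [orbitA_eq]
  linarith [Real.cosh_le_exp_abs (r * Λ), Real.cosh_pos (r * μ)]

lemma hasExpGrowthRate_orbitA {Λ μ : ℝ} (hμ : |μ| < Λ) :
    HasExpGrowthRate (fun r => orbitA r Λ μ) Λ := by
  have hΛ : |Λ| = Λ := abs_of_pos ((abs_nonneg μ).trans_lt hμ)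
  simpa only [orbitA_eq, hΛ] using
    ((hasExpGrowthRate_cosh Λ).sub (hasExpGrowthRate_cosh μ) (by rwa [hΛ])).const_mul two_pos

lemma norm_orbitW_mem_Icc (r Λ₁ Λ₂ μ₁ μ₂ θ₁ θ₂ : ℝ) :
    ‖orbitW r Λ₁ Λ₂ μ₁ μ₂ θ₁ θ₂‖ ∈ Set.Icc
      |√(orbitA r Λ₁ μ₁) * Real.exp (r * μ₂ / 2) - Real.exp (-(r * μ₁) / 2) * √(orbitA r Λ₂ μ₂)|
      (√(orbitA r Λ₁ μ₁) * Real.exp (r * μ₂ / 2) +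
        Real.exp (-(r * μ₁) / 2) * √(orbitA r Λ₂ μ₂)) := by
  set w₁ := cexp (θ₁ * I) * (√(orbitA r Λ₁ μ₁) : ℝ) * cexp ((r * μ₂ / 2 : ℝ) : ℂ)
  set w₂ := cexp (θ₂ * I) * cexp ((-(r * μ₁) / 2 : ℝ) : ℂ) * (√(orbitA r Λ₂ μ₂) : ℝ)
  have h₁ : ‖w₁‖ = √(orbitA r Λ₁ μ₁) * Real.exp (r * μ₂ / 2) := by
    simp only [w₁, norm_mul, Complex.norm_exp_ofReal_mul_I, Complex.norm_exp_ofReal,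
      Complex.norm_real, Real.norm_eq_abs, abs_of_nonneg (Real.sqrt_nonneg _), one_mul]
  have h₂ : ‖w₂‖ = Real.exp (-(r * μ₁) / 2) * √(orbitA r Λ₂ μ₂) := by
    simp only [w₂, norm_mul, Complex.norm_exp_ofReal_mul_I, Complex.norm_exp_ofReal,
      Complex.norm_real, Real.norm_eq_abs, abs_of_nonneg (Real.sqrt_nonneg _), one_mul]
  rw [← h₁, ← h₂]
  change ‖w₁ + w₂‖ ∈ _
  refine ⟨?_, norm_add_le w₁ w₂⟩
  simpa using abs_norm_sub_norm_le w₁ (-w₂)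

lemma hasExpGrowthRate_norm_orbitW {Λ₁ Λ₂ μ₁ μ₂ : ℝ} (θ₁ θ₂ : ℝ) (h₁ : |μ₁| < Λ₁)
    (h₂ : |μ₂| < Λ₂) (hne : Λ₁ + μ₂ ≠ Λ₂ - μ₁) :
    HasExpGrowthRate (fun r => ‖orbitW r Λ₁ Λ₂ μ₁ μ₂ θ₁ θ₂‖) (max (Λ₁ + μ₂) (Λ₂ - μ₁) / 2) := by
  have ha : HasExpGrowthRate (fun r => √(orbitA r Λ₁ μ₁) * Real.exp (r * μ₂ / 2))
      ((Λ₁ + μ₂) / 2) := by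
    simpa only [mul_div_assoc, add_div] using
      (hasExpGrowthRate_orbitA h₁).sqrt.mul (hasExpGrowthRate_exp (μ₂ / 2))
  have hb : HasExpGrowthRate (fun r => Real.exp (-(r * μ₁) / 2) * √(orbitA r Λ₂ μ₂))
      ((Λ₂ - μ₁) / 2) := by
    convert (hasExpGrowthRate_exp (-μ₁ / 2)).mul (hasExpGrowthRate_orbitA h₂).sqrt using 1
    · ext r
      ring_nf
    · ring
  rw [← max_div_div_right zero_le_two]
  refine (ha.abs_sub hb ?_).of_le_of_le (ha.add hb) ?_ ?_
  · exact fun h => hne (by linarith [h])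
  · exact .of_forall fun r => (norm_orbitW_mem_Icc r Λ₁ Λ₂ μ₁ μ₂ θ₁ θ₂).1
  · exact .of_forall fun r => (norm_orbitW_mem_Icc r Λ₁ Λ₂ μ₁ μ₂ θ₁ θ₂).2

lemma hasExpGrowthRate_radialCosh {Λ₁ Λ₂ μ₁ μ₂ : ℝ} (θ₁ θ₂ : ℝ) (h₁ : |μ₁| < Λ₁)
    (h₂ : |μ₂| < Λ₂) (hne : Λ₁ + μ₂ ≠ Λ₂ - μ₁) :
    HasExpGrowthRate (fun r => radialCosh r Λ₁ Λ₂ μ₁ μ₂ θ₁ θ₂) (max (Λ₁ + μ₂) (Λ₂ - μ₁)) := by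
  have hW := ((hasExpGrowthRate_norm_orbitW θ₁ θ₂ h₁ h₂ hne).pow 2).const_mul one_half_pos
  have hs : |μ₁ + μ₂| ≤ max (Λ₁ + μ₂) (Λ₂ - μ₁) := by
    rw [abs_lt] at h₁ h₂
    exact abs_le.2 ⟨by linarith [le_max_right (Λ₁ + μ₂) (Λ₂ - μ₁)],
      by linarith [le_max_left (Λ₁ + μ₂) (Λ₂ - μ₁)]⟩
  convert (hasExpGrowthRate_cosh (μ₁ + μ₂)).add hW using 1
  · ext r
    rw [radialCosh, ← Complex.sq_norm]
    ring
  · rw [Nat.cast_ofNat, mul_div_cancel₀ _ two_ne_zero, max_eq_right hs]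

lemma tendsto_radialCoord {Λ₁ Λ₂ μ₁ μ₂ : ℝ} (θ₁ θ₂ : ℝ) (h₁ : |μ₁| < Λ₁) (h₂ : |μ₂| < Λ₂)
    (hne : Λ₁ + μ₂ ≠ Λ₂ - μ₁) :
    Tendsto (fun r => radialCoord r Λ₁ Λ₂ μ₁ μ₂ θ₁ θ₂) atTop (𝓝 (max (Λ₁ + μ₂) (Λ₂ - μ₁))) := by
  simpa only [radialCoord, one_div_mul_eq_div] using
    (hasExpGrowthRate_radialCosh θ₁ θ₂ h₁ h₂ hne).tendsto_argcosh_div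

lemma one_le_radialCosh (r Λ₁ Λ₂ μ₁ μ₂ θ₁ θ₂ : ℝ) : 1 ≤ radialCosh r Λ₁ Λ₂ μ₁ μ₂ θ₁ θ₂ := by
  have := normSq_nonneg (orbitW r Λ₁ Λ₂ μ₁ μ₂ θ₁ θ₂)
  rw [radialCosh]
  linarith [Real.one_le_cosh (r * (μ₁ + μ₂))]

lemma radialCosh_le {r Λ₁ Λ₂ μ₁ μ₂ : ℝ} (θ₁ θ₂ : ℝ) (hr : 0 ≤ r) (h₁ : |μ₁| ≤ Λ₁)
    (h₂ : |μ₂| ≤ Λ₂) : radialCosh r Λ₁ Λ₂ μ₁ μ₂ θ₁ θ₂ ≤ 5 * Real.exp (r * (Λ₁ + Λ₂)) := by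
  obtain ⟨-, hW⟩ := norm_orbitW_mem_Icc r Λ₁ Λ₂ μ₁ μ₂ θ₁ θ₂
  set a := √(orbitA r Λ₁ μ₁) * Real.exp (r * μ₂ / 2)
  set b := Real.exp (-(r * μ₁) / 2) * √(orbitA r Λ₂ μ₂)
  have hΛ₁ : |r * Λ₁| = r * Λ₁ := abs_of_nonneg (mul_nonneg hr ((abs_nonneg _).trans h₁))
  have hΛ₂ : |r * Λ₂| = r * Λ₂ := abs_of_nonneg (mul_nonneg hr ((abs_nonneg _).trans h₂))
  rw [abs_le] at h₁ h₂
  have ha : a ^ 2 ≤ 2 * Real.exp (r * (Λ₁ + Λ₂)) := calc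
    a ^ 2 = orbitA r Λ₁ μ₁ * Real.exp (r * μ₂) := by
      rw [mul_pow, Real.sq_sqrt (orbitA_nonneg hr (abs_le.2 h₁)), ← Real.exp_nat_mul]
      ring_nf
    _ ≤ 2 * Real.exp (r * Λ₁) * Real.exp (r * Λ₂) := by
      exact mul_le_mul (hΛ₁ ▸ orbitA_le r Λ₁ μ₁)
        (Real.exp_le_exp.2 (mul_le_mul_of_nonneg_left h₂.2 hr)) (Real.exp_pos _).le (by positivity)
    _ = 2 * Real.exp (r * (Λ₁ + Λ₂)) := by rw [mul_assoc, ← Real.exp_add, mul_add]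
  have hb : b ^ 2 ≤ 2 * Real.exp (r * (Λ₁ + Λ₂)) := calc
    b ^ 2 = Real.exp (r * (-μ₁)) * orbitA r Λ₂ μ₂ := by
      rw [mul_pow, Real.sq_sqrt (orbitA_nonneg hr (abs_le.2 h₂)), ← Real.exp_nat_mul]
      ring_nf
    _ ≤ Real.exp (r * Λ₁) * (2 * Real.exp (r * Λ₂)) := by
      exact mul_le_mul (Real.exp_le_exp.2 (mul_le_mul_of_nonneg_left (by linarith) hr))
        (hΛ₂ ▸ orbitA_le r Λ₂ μ₂) (orbitA_nonneg hr (abs_le.2 h₂)) (Real.exp_pos _).le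
    _ = 2 * Real.exp (r * (Λ₁ + Λ₂)) := by rw [mul_left_comm, ← Real.exp_add, mul_add]
  have hcosh : Real.cosh (r * (μ₁ + μ₂)) ≤ Real.exp (r * (Λ₁ + Λ₂)) := by
    refine (Real.cosh_le_exp_abs _).trans (Real.exp_le_exp.2 ?_)
    rw [abs_mul, abs_of_nonneg hr]
    exact mul_le_mul_of_nonneg_left (abs_le.2 ⟨by linarith, by linarith⟩) hr
  have hnorm : normSq (orbitW r Λ₁ Λ₂ μ₁ μ₂ θ₁ θ₂) ≤ 2 * a ^ 2 + 2 * b ^ 2 := by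
    rw [← Complex.sq_norm]
    nlinarith [norm_nonneg (orbitW r Λ₁ Λ₂ μ₁ μ₂ θ₁ θ₂), sq_nonneg (a - b)]
  rw [radialCosh]
  linarith

lemma radialCoord_mem_Icc {r Λ₁ Λ₂ μ₁ μ₂ : ℝ} (θ₁ θ₂ : ℝ) (hr : 1 ≤ r) (h₁ : |μ₁| ≤ Λ₁)
    (h₂ : |μ₂| ≤ Λ₂) :
    radialCoord r Λ₁ Λ₂ μ₁ μ₂ θ₁ θ₂ ∈ Set.Icc 0 (Λ₁ + Λ₂ + Real.log 10) := by
  have hr₀ : 0 < r := one_pos.trans_le hr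
  have hX := one_le_radialCosh r Λ₁ Λ₂ μ₁ μ₂ θ₁ θ₂
  have harg : argcosh (radialCosh r Λ₁ Λ₂ μ₁ μ₂ θ₁ θ₂) ≤ Real.log 10 + r * (Λ₁ + Λ₂) := calc
    _ ≤ Real.log (2 * radialCosh r Λ₁ Λ₂ μ₁ μ₂ θ₁ θ₂) := argcosh_le_log_two_mul (by linarith)
    _ ≤ Real.log (10 * Real.exp (r * (Λ₁ + Λ₂))) :=
      Real.log_le_log (by linarith) (by linarith [radialCosh_le θ₁ θ₂ hr₀.le h₁ h₂])
    _ = Real.log 10 + r * (Λ₁ + Λ₂) := by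
      rw [Real.log_mul (by norm_num) (Real.exp_pos _).ne', Real.log_exp]
  rw [radialCoord, one_div_mul_eq_div]
  refine ⟨div_nonneg (argcosh_nonneg hX) hr₀.le, (div_le_iff₀ hr₀).2 ?_⟩
  have : 0 ≤ Real.log 10 := Real.log_nonneg (by norm_num)
  nlinarith

lemma continuous_radialCoord (r Λ₁ Λ₂ : ℝ) :
    Continuous fun q : (ℝ × ℝ) × ℝ × ℝ => radialCoord r Λ₁ Λ₂ q.1.1 q.1.2 q.2.1 q.2.2 := by
  have hX : Continuous fun q : (ℝ × ℝ) × ℝ × ℝ => radialCosh r Λ₁ Λ₂ q.1.1 q.1.2 q.2.1 q.2.2 := by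
    have := Complex.continuous_normSq
    unfold radialCosh orbitW orbitA
    fun_prop
  exact continuous_const.mul <| continuousOn_argcosh.comp_continuous hX fun q =>
    one_le_radialCosh r Λ₁ Λ₂ _ _ _ _

lemma exists_bound_integrand {Λ₁ Λ₂ : ℝ} {φ ψ : ℝ → ℝ} (hφ : Continuous φ) (hψ : Continuous ψ) :
    ∃ C, ∀ r ≥ 1, ∀ μ₁ μ₂ θ₁ θ₂, |μ₁| ≤ Λ₁ → |μ₂| ≤ Λ₂ →
      ‖φ (radialCoord r Λ₁ Λ₂ μ₁ μ₂ θ₁ θ₂) * ψ (μ₁ + μ₂)‖ ≤ C := by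
  obtain ⟨Cφ, hCφ⟩ := (isCompact_Icc (a := 0) (b := Λ₁ + Λ₂ + Real.log 10))
    |>.exists_bound_of_continuousOn hφ.continuousOn
  obtain ⟨Cψ, hCψ⟩ := (isCompact_Icc (a := -(Λ₁ + Λ₂)) (b := Λ₁ + Λ₂))
    |>.exists_bound_of_continuousOn hψ.continuousOn
  refine ⟨Cφ * Cψ, fun r hr μ₁ μ₂ θ₁ θ₂ h₁ h₂ => ?_⟩
  have hs : μ₁ + μ₂ ∈ Set.Icc (-(Λ₁ + Λ₂)) (Λ₁ + Λ₂) := by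
    rw [abs_le] at h₁ h₂
    constructor <;> linarith
  have hL := hCφ _ (radialCoord_mem_Icc θ₁ θ₂ hr h₁ h₂)
  rw [norm_mul]
  exact mul_le_mul hL (hCψ _ hs) (norm_nonneg _) ((norm_nonneg _).trans hL)

lemma continuous_integrand {Λ₁ Λ₂ : ℝ} {φ ψ : ℝ → ℝ} (hφ : Continuous φ) (hψ : Continuous ψ)
    (r : ℝ) : Continuous fun q : (ℝ × ℝ) × ℝ × ℝ =>
      φ (radialCoord r Λ₁ Λ₂ q.1.1 q.1.2 q.2.1 q.2.2) * ψ (q.1.1 + q.1.2) :=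
  (hφ.comp (continuous_radialCoord r Λ₁ Λ₂)).mul (hψ.comp (by fun_prop))

lemma abs_le_of_mem_uIoc {x Λ : ℝ} (hΛ : 0 ≤ Λ) (hx : x ∈ Ι (-Λ) Λ) : |x| ≤ Λ := by
  rw [Set.uIoc_of_le (by linarith)] at hx
  exact abs_le.2 ⟨hx.1.le, hx.2⟩

lemma ae_abs_lt_of_mem_uIoc {Λ : ℝ} (hΛ : 0 ≤ Λ) : ∀ᵐ x, x ∈ Ι (-Λ) Λ → |x| < Λ := by
  filter_upwards [Measure.ae_ne volume Λ] with x hne hx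
  refine (abs_le_of_mem_uIoc hΛ hx).lt_of_ne fun h => hne ?_
  rw [Set.uIoc_of_le (by linarith)] at hx
  rcases (abs_eq hΛ).1 h with h | h <;> linarith [hx.1]

section DominatedConvergence

variable {ι E : Type*} [NormedAddCommGroup E] [NormedSpace ℝ E] {l : Filter ι}
  [l.IsCountablyGenerated]

lemma tendsto_intervalIntegral_of_bounded {f : ι → ℝ → E} {g : ℝ → E} {a b C : ℝ}
    (hf : ∀ i, Continuous (f i)) (hbound : ∀ᶠ i in l, ∀ x ∈ Ι a b, ‖f i x‖ ≤ C)
    (hlim : ∀ᵐ x, x ∈ Ι a b → Tendsto (fun i => f i x) l (𝓝 (g x))) :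
    Tendsto (fun i => ∫ x in a..b, f i x) l (𝓝 (∫ x in a..b, g x)) :=
  intervalIntegral.tendsto_integral_filter_of_dominated_convergence (fun _ => C)
    (.of_forall fun i => (hf i).aestronglyMeasurable) (hbound.mono fun _ hi => .of_forall hi)
    intervalIntegrable_const hlim

lemma tendsto_intervalIntegral_intervalIntegral_of_bounded {f : ι → ℝ → ℝ → E}
    {g : ℝ → ℝ → E} {a b c d C : ℝ} (hf : ∀ i, Continuous (Function.uncurry (f i)))
    (hbound : ∀ᶠ i in l, ∀ x ∈ Ι a b, ∀ y ∈ Ι c d, ‖f i x y‖ ≤ C)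
    (hlim : ∀ᵐ x, x ∈ Ι a b → ∀ᵐ y, y ∈ Ι c d → Tendsto (fun i => f i x y) l (𝓝 (g x y))) :
    Tendsto (fun i => ∫ x in a..b, ∫ y in c..d, f i x y) l
      (𝓝 (∫ x in a..b, ∫ y in c..d, g x y)) := by
  refine tendsto_intervalIntegral_of_bounded
    (fun i => intervalIntegral.continuous_parametric_intervalIntegral_of_continuous' (hf i) c d)
    (hbound.mono fun i hi x hx => intervalIntegral.norm_integral_le_of_norm_le_const (hi x hx)) ?_
  filter_upwards [hlim] with x hx hxab
  exact tendsto_intervalIntegral_of_bounded (fun i => (hf i).uncurry_left x)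
    (hbound.mono fun i hi => hi x hxab) (hx hxab)

lemma continuous_intervalIntegral_intervalIntegral {X : Type*} [TopologicalSpace X]
    {f : X → ℝ → ℝ → E} (hf : Continuous fun p : X × ℝ × ℝ => f p.1 p.2.1 p.2.2) (a b c d : ℝ) :
    Continuous fun x => ∫ s in a..b, ∫ t in c..d, f x s t := by
  refine intervalIntegral.continuous_parametric_intervalIntegral_of_continuous' ?_ a b
  exact intervalIntegral.continuous_parametric_intervalIntegral_of_continuous'
    (f := fun (q : X × ℝ) t => f q.1 q.2 t)
    (hf.comp (by fun_prop : Continuous fun q : (X × ℝ) × ℝ => (q.1.1, q.1.2, q.2))) c d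

end DominatedConvergence

lemma tendsto_integral_integral_angles {Λ₁ Λ₂ μ₁ μ₂ : ℝ} {φ ψ : ℝ → ℝ} (hφ : Continuous φ)
    (hψ : Continuous ψ) (h₁ : |μ₁| < Λ₁) (h₂ : |μ₂| < Λ₂) (hne : Λ₁ + μ₂ ≠ Λ₂ - μ₁) :
    Tendsto (fun r => ∫ θ₁ in (0:ℝ)..2 * π, ∫ θ₂ in (0:ℝ)..2 * π,
        φ (radialCoord r Λ₁ Λ₂ μ₁ μ₂ θ₁ θ₂) * ψ (μ₁ + μ₂)) atTop
      (𝓝 (2 * π * (2 * π * (φ (max (Λ₁ + μ₂) (Λ₂ - μ₁)) * ψ (μ₁ + μ₂))))) := by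
  obtain ⟨C, hC⟩ := exists_bound_integrand (Λ₁ := Λ₁) (Λ₂ := Λ₂) hφ hψ
  have hslice : Continuous fun p : ℝ × ℝ => (((μ₁, μ₂), p) : (ℝ × ℝ) × ℝ × ℝ) := by fun_prop
  have hcont : ∀ r, Continuous (Function.uncurry fun θ₁ θ₂ =>
      φ (radialCoord r Λ₁ Λ₂ μ₁ μ₂ θ₁ θ₂) * ψ (μ₁ + μ₂)) := fun r =>
    ((continuous_integrand hφ hψ r).comp hslice :)
  simpa only [intervalIntegral.integral_const, smul_eq_mul, sub_zero] using
    tendsto_intervalIntegral_intervalIntegral_of_bounded (a := 0) (b := 2 * π) (c := 0)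
      (d := 2 * π) (g := fun _ _ => _) hcont
      ((eventually_ge_atTop 1).mono fun r hr _ _ _ _ => hC r hr _ _ _ _ h₁.le h₂.le)
      (.of_forall fun _ _ => .of_forall fun _ _ =>
        ((hφ.tendsto _).comp (tendsto_radialCoord _ _ h₁ h₂ hne)).mul_const _)

/-- The right arrow of the commutative diagram (4.5): the averaged radial
coordinate of the product of two uniform dressing-orbit elements converges,
as the curvature `r → ∞`, to the average of the crystal tensor-product
highest-weight rule `max(Λ₁ + μ₂, Λ₂ - μ₁)`. -/
theorem crystal_tensor_integral_limit
    (Λ₁ Λ₂ : ℝ) (hΛ₁ : 0 < Λ₁) (hΛ₂ : 0 < Λ₂)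
    (φ ψ : ℝ → ℝ) (hφ : Continuous φ) (hψ : Continuous ψ) :
    Tendsto
      (fun r : ℝ =>
        (1 / (4 * Λ₁ * Λ₂ * (4 * Real.pi ^ 2))) *
          ∫ μ₁ in (-Λ₁)..Λ₁, ∫ μ₂ in (-Λ₂)..Λ₂,
            ∫ θ₁ in (0:ℝ)..(2 * Real.pi), ∫ θ₂ in (0:ℝ)..(2 * Real.pi),
              φ ((1 / r) * argcosh
                  (Real.cosh (r * (μ₁ + μ₂)) +
                    Complex.normSq
                      (Complex.exp (θ₁ * Complex.I) *
                          (Real.sqrt (Real.exp (r * Λ₁) + Real.exp (-(r * Λ₁)) -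
                              Real.exp (r * μ₁) - Real.exp (-(r * μ₁))) : ℝ) *
                          Complex.exp ((r * μ₂ / 2 : ℝ) : ℂ) +
                        Complex.exp (θ₂ * Complex.I) *
                          Complex.exp ((-(r * μ₁) / 2 : ℝ) : ℂ) *
                          (Real.sqrt (Real.exp (r * Λ₂) + Real.exp (-(r * Λ₂)) -
                              Real.exp (r * μ₂) - Real.exp (-(r * μ₂))) : ℝ)) / 2)) *
                ψ (μ₁ + μ₂))
      atTop
      (nhds ((1 / (4 * Λ₁ * Λ₂)) *
        ∫ μ₁ in (-Λ₁)..Λ₁, ∫ μ₂ in (-Λ₂)..Λ₂,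
          φ (max (Λ₁ + μ₂) (Λ₂ - μ₁)) * ψ (μ₁ + μ₂))) := by
  change Tendsto (fun r => _ * ∫ μ₁ in (-Λ₁)..Λ₁, ∫ μ₂ in (-Λ₂)..Λ₂, ∫ θ₁ in (0:ℝ)..2 * π,
    ∫ θ₂ in (0:ℝ)..2 * π, φ (radialCoord r Λ₁ Λ₂ μ₁ μ₂ θ₁ θ₂) * ψ (μ₁ + μ₂)) atTop _
  obtain ⟨C, hC⟩ := exists_bound_integrand (Λ₁ := Λ₁) (Λ₂ := Λ₂) hφ hψ
  have hlim := tendsto_intervalIntegral_intervalIntegral_of_bounded (a := -Λ₁) (b := Λ₁)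
    (c := -Λ₂) (d := Λ₂) (C := C * |2 * π - 0| * |2 * π - 0|)
    (fun r => continuous_intervalIntegral_intervalIntegral (continuous_integrand hφ hψ r) _ _ _ _)
    ((eventually_ge_atTop 1).mono fun r hr μ₁ hμ₁ μ₂ hμ₂ =>
      intervalIntegral.norm_integral_le_of_norm_le_const fun θ₁ _ =>
        intervalIntegral.norm_integral_le_of_norm_le_const fun θ₂ _ =>
          hC r hr μ₁ μ₂ θ₁ θ₂ (abs_le_of_mem_uIoc hΛ₁.le hμ₁) (abs_le_of_mem_uIoc hΛ₂.le hμ₂))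
    (by
      filter_upwards [ae_abs_lt_of_mem_uIoc hΛ₁.le] with μ₁ h₁ hμ₁
      filter_upwards [ae_abs_lt_of_mem_uIoc hΛ₂.le, Measure.ae_ne volume (Λ₂ - μ₁ - Λ₁)]
        with μ₂ h₂ hne hμ₂
      exact tendsto_integral_integral_angles hφ hψ (h₁ hμ₁) (h₂ hμ₂) fun h => hne (by linarith))
  simp only [intervalIntegral.integral_const_mul] at hlim
  convert hlim.const_mul (1 / (4 * Λ₁ * Λ₂ * (4 * π ^ 2))) using 2
  field_simp
  ring
end

section
/- For every x ∈ ℝ and every c ≥ 0, the function r ↦ (1/r)·Argcosh(cosh(r·x) + (r²/2)·c) tends to √(x² + c) as r → 0⁺. -/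
/-!
For `y ≥ 1`, `argcosh y = arsinh √(y² - 1)`. With `y(r) = cosh (r x) + r² c / 2` we have
`y² - 1 = r² · q(r) · (y + 1)` where `q(r) = (y - 1) / r² → (x² + c) / 2`, since
`cosh t - 1 = 2 sinh² (t / 2)` and `sinh' 0 = 1`. So the quantity is `arsinh (r h(r)) / r` with
`h(r) = √(q(r) (y(r) + 1)) → √(x² + c)`, and `arsinh' 0 = 1` gives the limit.
-/

open Filter Real

open Topology Asymptotics

theorem HasDerivAt.tendsto_comp_mul_div {𝕜 : Type*} [NontriviallyNormedField 𝕜]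
    {f h : 𝕜 → 𝕜} {f' a : 𝕜} (hf : HasDerivAt f f' 0) (hf0 : f 0 = 0)
    (hh : Tendsto h (𝓝[≠] 0) (𝓝 a)) :
    Tendsto (fun r => f (r * h r) / r) (𝓝[≠] 0) (𝓝 (f' * a)) := by
  have hlin : (fun t => f t - t * f') =o[𝓝 0] fun t => t := by
    simpa [hf0] using hasDerivAt_iff_isLittleO_nhds_zero.mp hf
  have hrh : Tendsto (fun r => r * h r) (𝓝[≠] 0) (𝓝 0) := by
    simpa using (tendsto_nhdsWithin_of_tendsto_nhds tendsto_id).mul hh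
  have hrem : (fun r => f (r * h r) - r * h r * f') =o[𝓝[≠] 0] id :=
    (hlin.comp_tendsto hrh).trans_isBigO
      ((isBigO_refl id _).mul (hh.isBigO_one 𝕜) |>.congr_right (by simp))
  have hdiv : Tendsto (fun r => (f (r * h r) - r * h r * f') / r + f' * h r)
      (𝓝[≠] 0) (𝓝 (0 + f' * a)) :=
    hrem.tendsto_div_nhds_zero.add (hh.const_mul f')
  rw [zero_add] at hdiv
  refine hdiv.congr' ?_
  filter_upwards [self_mem_nhdsWithin] with r (hr : r ≠ 0)
  field_simp
  ring

theorem tendsto_cosh_mul_sub_one_div_sq (x : ℝ) :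
    Tendsto (fun r => (cosh (r * x) - 1) / r ^ 2) (𝓝[≠] 0) (𝓝 (x ^ 2 / 2)) := by
  have hsinh : Tendsto (fun r => sinh (r * (x / 2)) / r) (𝓝[≠] 0) (𝓝 (x / 2)) := by
    simpa using (hasDerivAt_sinh 0).tendsto_comp_mul_div sinh_zero tendsto_const_nhds
  have hlim := (hsinh.pow 2).const_mul 2
  rw [show 2 * (x / 2) ^ 2 = x ^ 2 / 2 by ring] at hlim
  refine hlim.congr fun r => ?_
  have hcosh : cosh (r * x) = 2 * sinh (r * (x / 2)) ^ 2 + 1 := by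
    rw [show r * x = 2 * (r * (x / 2)) by ring, cosh_two_mul, cosh_sq]
    ring
  rw [hcosh]
  ring

theorem argcosh_eq_arsinh_sqrt {y : ℝ} (hy : 1 ≤ y) : argcosh y = arsinh √(y ^ 2 - 1) := by
  show arcosh y = _
  rw [← sinh_arcosh hy, arsinh_sinh]

/-- Flat limit of the radial coordinate:
`(1/r)·Argcosh(cosh(rx) + (r²/2)c) → √(x² + c)` as `r → 0⁺`. -/
theorem flat_limit_argcosh (x c : ℝ) (hc : 0 ≤ c) :
    Tendsto
      (fun r : ℝ => (1 / r) * argcosh (Real.cosh (r * x) + r ^ 2 / 2 * c))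
      (nhdsWithin 0 (Set.Ioi 0)) (nhds (Real.sqrt (x ^ 2 + c))) := by
  set y : ℝ → ℝ := fun r => cosh (r * x) + r ^ 2 / 2 * c
  have hy : Tendsto y (𝓝[≠] 0) (𝓝 1) := by
    have : Continuous y := by fun_prop
    simpa [y] using (this.tendsto 0).mono_left nhdsWithin_le_nhds
  have hq : Tendsto (fun r => (y r - 1) / r ^ 2) (𝓝[≠] 0) (𝓝 ((x ^ 2 + c) / 2)) := by
    rw [add_div]
    refine ((tendsto_cosh_mul_sub_one_div_sq x).add_const (c / 2)).congr' ?_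
    filter_upwards [self_mem_nhdsWithin] with r (hr : r ≠ 0)
    simp only [y]
    field_simp
    ring
  have hsqrt : Tendsto (fun r => √((y r - 1) / r ^ 2 * (y r + 1))) (𝓝[≠] 0) (𝓝 √(x ^ 2 + c)) := by
    have hlim := (hq.mul (hy.add_const 1)).sqrt
    rwa [show (x ^ 2 + c) / 2 * (1 + 1) = x ^ 2 + c by ring] at hlim
  have harsinh := (hasDerivAt_arsinh 0).tendsto_comp_mul_div arsinh_zero hsqrt
  simp only [zero_pow two_ne_zero, add_zero, sqrt_one, inv_one, one_mul] at harsinh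
  refine (harsinh.mono_left (nhdsWithin_mono _ fun r (hr : 0 < r) => hr.ne')).congr' ?_
  filter_upwards [self_mem_nhdsWithin] with r (hr : 0 < r)
  have hy1 : 1 ≤ y r := by
    simp only [y]
    linarith [one_le_cosh (r * x), mul_nonneg (sq_nonneg r) hc]
  have hsq : y r ^ 2 - 1 = r ^ 2 * ((y r - 1) / r ^ 2 * (y r + 1)) := by
    field_simp
    ring
  rw [argcosh_eq_arsinh_sqrt hy1, one_div_mul_eq_div, hsq, sqrt_mul (sq_nonneg r), sqrt_sq hr.le]
end
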